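/- arXiv:1207.6495 — 9 statements merged into one kernel-verified Lean document; each statement's English description precedes it below -/
import Mathlib

section
/- Let 0 ≤ α < 1 and let p, n be positive integers. If f is analytic on the open unit disk D with f(z) = z^p + a_{n+p} z^{n+p} + a_{n+p+1} z^{n+p+1} + ⋯ and Re(1 + z f''(z)/f'(z)) > ((2p−n) + α(2p+n)) / (2(α+1)) for all z ∈ D, then Re(f'(z)/(p z^{p−1})) > (1+α)/2 for all z ∈ D. -/
/-!
Put `G = f' / (p z^(p-1)) = 1 + zⁿ v`, so that `1 + z f''/f' = p + z G'/G`. If `Re G` drops to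
`c = (1+α)/2` in the disk, take such a point `z₀` of least modulus. The Möbius map
`w = (1 - G)/(G - α)` sends `{Re G ≥ c}` into the closed unit disk, so `|w| ≤ 1 = |w z₀|` on
`|z| ≤ |z₀|`, and `w = zⁿ m`. By the maximum modulus principle `|m|` is maximal on that disk at
`z₀`, where the radial derivative of `|m|²` is therefore nonnegative and the angular one vanishes.
Hence `z₀ w'(z₀) = k w(z₀)` with `k ≥ n` (Jack's lemma), and translated back to `G` this forces
`Re (z₀ G'/G) ≤ -n(1-α)/(2(1+α))`, against the hypothesis.
-/

open Complex Metric Set Filter ComplexConjugate Topology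

theorem re_mul_deriv_mul_conj_nonneg_of_isMaxOn_norm {m : ℂ → ℂ} {z₀ : ℂ}
    (hm : DifferentiableAt ℂ m z₀) (hmax : IsMaxOn (‖m ·‖) (closedBall 0 ‖z₀‖) z₀) :
    0 ≤ (z₀ * deriv m z₀ * conj (m z₀)).re := by
  have hmax_sq : IsLocalMaxOn (‖m ·‖ ^ 2) (closedBall 0 ‖z₀‖) z₀ :=
    IsMaxOn.localize fun z hz => pow_le_pow_left₀ (norm_nonneg _) (hmax hz) 2
  have hseg : segment ℝ z₀ 0 ⊆ closedBall 0 ‖z₀‖ :=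
    (convex_closedBall 0 ‖z₀‖).segment_subset (by simp) (by simp)
  have := hmax_sq.hasFDerivWithinAt_nonpos
    (hm.hasFDerivAt.restrictScalars ℝ).norm_sq.hasFDerivWithinAt
    (sub_mem_posTangentConeAt_of_segment_subset hseg)
  simp only [zero_sub, smul_apply, ContinuousLinearMap.comp_apply,
    ContinuousLinearMap.coe_restrictScalars', fderiv_eq_smul_deriv, smul_eq_mul, coe_innerSL_apply,
    neg_mul, inner_neg_right, nsmul_eq_mul, Nat.cast_ofNat, Complex.inner] at this
  linarith

theorem im_mul_deriv_mul_conj_eq_zero_of_isMaxOn_norm {m : ℂ → ℂ} {z₀ : ℂ}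
    (hm : DifferentiableAt ℂ m z₀) (hmax : IsMaxOn (‖m ·‖) (sphere 0 ‖z₀‖) z₀) :
    (z₀ * deriv m z₀ * conj (m z₀)).im = 0 := by
  have hrot : HasDerivAt (fun θ : ℝ => m (exp (θ * I) * z₀)) (I * z₀ * deriv m z₀) 0 := by
    have h1 : HasDerivAt (fun ζ : ℂ => exp (ζ * I) * z₀) (I * z₀) ((0:ℝ):ℂ) := by
      simpa using ((hasDerivAt_id ((0:ℝ):ℂ)).mul_const I).cexp.mul_const z₀
    have h2 := hm.hasDerivAt.comp_of_eq ((0:ℝ):ℂ) h1 (by simp)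
    rw [mul_comm] at h2
    exact h2.comp_ofReal
  have hmaxθ : IsLocalMax (fun θ : ℝ => ‖m (exp (θ * I) * z₀)‖ ^ 2) 0 :=
    Eventually.of_forall fun θ => by
      simpa using pow_le_pow_left₀ (norm_nonneg _) (hmax (by simp : exp (θ * I) * z₀ ∈ _)) 2
  have := hmaxθ.hasDerivAt_eq_zero hrot.norm_sq
  simp only [ofReal_zero, zero_mul, exp_zero, one_mul, Complex.inner, mul_assoc I, I_mul_re] at this
  linarith

theorem exists_nonneg_eq_mul_logDeriv_of_isMaxOn_norm {m : ℂ → ℂ} {z₀ : ℂ}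
    (hm : DifferentiableAt ℂ m z₀) (hmax : IsMaxOn (‖m ·‖) (closedBall 0 ‖z₀‖) z₀)
    (hm₀ : m z₀ ≠ 0) : ∃ k : ℝ, 0 ≤ k ∧ z₀ * logDeriv m z₀ = k := by
  set P := z₀ * deriv m z₀ * conj (m z₀)
  have hP : P = (P.re : ℂ) := Complex.ext rfl <|
    (im_mul_deriv_mul_conj_eq_zero_of_isMaxOn_norm hm
      (hmax.on_subset sphere_subset_closedBall)).trans (ofReal_im _).symm
  refine ⟨P.re / normSq (m z₀), div_nonneg
    (re_mul_deriv_mul_conj_nonneg_of_isMaxOn_norm hm hmax) (normSq_nonneg _), ?_⟩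
  have hconj : conj (m z₀) ≠ 0 := (map_ne_zero _).2 hm₀
  rw [logDeriv_apply, ofReal_div, ← hP, ← mul_conj]
  field_simp
  ring

theorem exists_natCast_le_eq_mul_logDeriv_pow_mul {m : ℂ → ℂ} {z₀ : ℂ} (n : ℕ)
    (hm : ∀ z ∈ closedBall 0 ‖z₀‖, DifferentiableAt ℂ m z)
    (hmax : ∀ z ∈ sphere 0 ‖z₀‖, ‖z ^ n * m z‖ ≤ ‖z₀ ^ n * m z₀‖)
    (hz₀ : z₀ ≠ 0) (hm₀ : m z₀ ≠ 0) :
    ∃ k : ℝ, n ≤ k ∧ z₀ * logDeriv (fun z => z ^ n * m z) z₀ = k := by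
  have hr : 0 < ‖z₀‖ := norm_pos_iff.2 hz₀
  have hmax' : IsMaxOn (‖m ·‖) (closedBall 0 ‖z₀‖) z₀ := by
    intro z hz
    rw [← closure_ball 0 hr.ne'] at hz
    refine Complex.norm_le_of_forall_mem_frontier_norm_le isBounded_ball
      (DifferentiableOn.diffContOnCl_ball (fun w hw => (hm w hw).differentiableWithinAt)
        subset_rfl) (fun w hw => ?_) hz
    rw [frontier_ball 0 hr.ne'] at hw
    have := hmax w hw
    rw [norm_mul, norm_mul, norm_pow, norm_pow, mem_sphere_zero_iff_norm.1 hw] at this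
    exact le_of_mul_le_mul_left this (by positivity)
  obtain ⟨k, hk, hmk⟩ := exists_nonneg_eq_mul_logDeriv_of_isMaxOn_norm
    (hm z₀ (by simp)) hmax' hm₀
  refine ⟨n + k, by linarith, ?_⟩
  rw [logDeriv_mul (f := (· ^ n)) z₀ (pow_ne_zero n hz₀) hm₀ (differentiableAt_pow n)
    (hm z₀ (by simp)), mul_add, hmk, logDeriv_pow]
  field_simp
  push_cast
  ring

theorem exists_mem_ball_eq_and_le_on_closedBall {E : Type*} [NormedAddCommGroup E] [NormedSpace ℝ E]
    [ProperSpace E] {φ : E → ℝ} {R c : ℝ} (hφ : ContinuousOn φ (ball 0 R)) (h₀ : c < φ 0)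
    {z₁ : E} (hz₁ : z₁ ∈ ball 0 R) (hz₁c : φ z₁ ≤ c) :
    ∃ z₀ ∈ ball (0 : E) R, φ z₀ = c ∧ ∀ z ∈ closedBall (0 : E) ‖z₀‖, c ≤ φ z := by
  have hsub : ∀ {r}, r < R → closedBall (0 : E) r ⊆ ball 0 R := closedBall_subset_ball
  have hK : IsCompact (closedBall (0 : E) ‖z₁‖ ∩ φ ⁻¹' Iic c) :=
    (isCompact_closedBall 0 ‖z₁‖).of_isClosed_subset
      ((hφ.mono (hsub (mem_ball_zero_iff.1 hz₁))).preimage_isClosed_of_isClosed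
        isClosed_closedBall isClosed_Iic) inter_subset_left
  obtain ⟨z₀, ⟨hz₀₁, hz₀c⟩, hmin⟩ :=
    hK.exists_isMinOn ⟨z₁, by simp, hz₁c⟩ continuous_norm.continuousOn
  have hz₀R : ‖z₀‖ < R := (mem_closedBall_zero_iff.1 hz₀₁).trans_lt (mem_ball_zero_iff.1 hz₁)
  have hz₀ : z₀ ≠ 0 := by rintro rfl; exact (h₀.trans_le hz₀c).false
  have hlt : ∀ z ∈ ball (0 : E) ‖z₀‖, c ≤ φ z := fun z hz => by
    by_contra! h
    have hz : ‖z‖ < ‖z₀‖ := mem_ball_zero_iff.1 hz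
    exact hz.not_ge
      (hmin ⟨mem_closedBall_zero_iff.2 (hz.le.trans (mem_closedBall_zero_iff.1 hz₀₁)), h.le⟩)
  have hle : closure (ball (0 : E) ‖z₀‖) ⊆ closedBall 0 ‖z₀‖ ∩ φ ⁻¹' Ici c :=
    closure_minimal (fun z hz => ⟨ball_subset_closedBall hz, hlt z hz⟩) <|
      (hφ.mono (hsub hz₀R)).preimage_isClosed_of_isClosed isClosed_closedBall isClosed_Ici
  rw [closure_ball 0 (norm_ne_zero_iff.2 hz₀)] at hle
  exact ⟨z₀, mem_ball_zero_iff.2 hz₀R, le_antisymm hz₀c (hle (by simp)).2, fun z hz => (hle hz).2⟩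

theorem re_mul_div_le_of_re_eq {α : ℝ} (hα₀ : 0 ≤ α) (hα₁ : α < 1) {k b : ℝ} (hb : 0 ≤ b)
    (hbk : b ≤ k) {g : ℂ} (hg : g.re = (1 + α) / 2) :
    (k * (1 - g) * (g - α) / ((α - 1) * g)).re ≤ -(b * (1 - α) / (2 * (1 + α))) := by
  set c := (1 + α) / 2
  set y := g.im
  set P : ℝ := ((1 - α) / 2) ^ 2 + y ^ 2
  -- on the line `Re g = c` we have `g - α = conj (1 - g)`
  have hP : (1 - g) * (g - α) = P := by
    apply Complex.ext <;> simp only [mul_re, mul_im, sub_re, sub_im, one_re, one_im, ofReal_re,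
      ofReal_im, hg, P, c, y] <;> ring
  have hc : 0 < c := by simp only [c]; linarith
  have hg₀ : g ≠ 0 := ne_of_apply_ne re (by rw [hg, zero_re]; exact hc.ne')
  have hα : (α : ℂ) - 1 ≠ 0 := by exact_mod_cast sub_ne_zero.2 hα₁.ne
  have hexpr : k * (1 - g) * (g - α) / ((α - 1) * g) = ((k * P / (α - 1) : ℝ) : ℂ) / g := by
    rw [mul_assoc, hP]; push_cast; field_simp
  rw [hexpr, div_re, ofReal_re, ofReal_im, zero_mul, zero_div, add_zero, normSq_apply, hg]
  have hD : 0 < c * c + y * y := add_pos_of_pos_of_nonneg (mul_pos hc hc) (mul_self_nonneg y)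
  have key : b * (1 - α) / (2 * (1 + α)) * ((1 - α) * (c * c + y * y)) ≤ k * P * c := by
    rw [div_mul_eq_mul_div, div_le_iff₀ (by linarith)]
    have h2c : 2 * (1 + α) = 4 * c := by simp only [c]; ring
    rw [h2c]
    have hPc : 4 * c * c * P = c * c * (1 - α) ^ 2 + (1 - α) ^ 2 * y ^ 2 + 4 * α * y ^ 2 := by
      simp only [P, c]; ring
    nlinarith [mul_le_mul_of_nonneg_right hbk (by positivity : 0 ≤ 4 * c * c * P),
      mul_nonneg hb (mul_nonneg hα₀ (sq_nonneg y))]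
  rw [div_mul_eq_mul_div, div_div, div_le_iff_of_neg (by nlinarith)]
  linarith

theorem normSq_one_sub_sub_normSq_sub_ofReal (g : ℂ) (α : ℝ) :
    normSq (1 - g) - normSq (g - α) = (1 - α) * (1 + α - 2 * g.re) := by
  simp only [normSq_apply, sub_re, sub_im, one_re, one_im, ofReal_re, ofReal_im]
  ring

theorem norm_one_sub_le_norm_sub_ofReal {α : ℝ} (hα : α < 1) {g : ℂ} (hg : (1 + α) / 2 ≤ g.re) :
    ‖1 - g‖ ≤ ‖g - α‖ := by
  rw [← sq_le_sq₀ (norm_nonneg _) (norm_nonneg _), ← normSq_eq_norm_sq, ← normSq_eq_norm_sq,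
    ← sub_nonpos, normSq_one_sub_sub_normSq_sub_ofReal]
  exact mul_nonpos_of_nonneg_of_nonpos (by linarith) (by linarith)

theorem norm_one_sub_eq_norm_sub_ofReal {α : ℝ} {g : ℂ} (hg : g.re = (1 + α) / 2) :
    ‖1 - g‖ = ‖g - α‖ := by
  rw [← sq_eq_sq₀ (norm_nonneg _) (norm_nonneg _), ← normSq_eq_norm_sq, ← normSq_eq_norm_sq,
    ← sub_eq_zero, normSq_one_sub_sub_normSq_sub_ofReal, hg]
  ring

theorem exists_natCast_le_mul_logDeriv_eq_of_re_eq {α : ℝ} (hα : α < 1) {n : ℕ}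
    {G v : ℂ → ℂ} (hv : DifferentiableOn ℂ v (ball 0 1))
    (hGv : ∀ z ∈ ball (0 : ℂ) 1, G z = 1 + z ^ n * v z) {z₀ : ℂ} (hz₀ : z₀ ∈ ball (0 : ℂ) 1)
    (hz₀0 : z₀ ≠ 0) (hGz₀ : (G z₀).re = (1 + α) / 2)
    (hG : ∀ z ∈ closedBall (0 : ℂ) ‖z₀‖, (1 + α) / 2 ≤ (G z).re) :
    ∃ k : ℝ, n ≤ k ∧
      z₀ * logDeriv G z₀ = k * (1 - G z₀) * (G z₀ - α) / ((α - 1) * G z₀) := by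
  have hGd : DifferentiableOn ℂ G (ball 0 1) :=
    ((differentiableOn_const 1).add ((differentiable_pow n).differentiableOn.mul hv)).congr hGv
  have hball : closedBall (0 : ℂ) ‖z₀‖ ⊆ ball 0 1 :=
    closedBall_subset_ball (mem_ball_zero_iff.1 hz₀)
  have hGα : ∀ z ∈ closedBall (0 : ℂ) ‖z₀‖, G z - α ≠ 0 := fun z hz =>
    ne_of_apply_ne re (by rw [sub_re, ofReal_re, zero_re]; linarith [hG z hz])
  set m : ℂ → ℂ := fun z => -v z / (G z - α)
  have hw : ∀ z ∈ ball (0 : ℂ) 1, z ^ n * m z = (1 - G z) / (G z - α) := fun z hz => by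
    simp only [m]; rw [hGv z hz]; ring
  have hw₀ : ‖z₀ ^ n * m z₀‖ = 1 := by
    rw [hw z₀ hz₀, norm_div, norm_one_sub_eq_norm_sub_ofReal hGz₀,
      div_self (norm_ne_zero_iff.2 (hGα z₀ (by simp)))]
  have hmd : ∀ z ∈ closedBall (0 : ℂ) ‖z₀‖, DifferentiableAt ℂ m z := fun z hz =>
    (hv.differentiableAt (isOpen_ball.mem_nhds (hball hz))).neg.div
      ((hGd.differentiableAt (isOpen_ball.mem_nhds (hball hz))).sub_const _) (hGα z hz)
  obtain ⟨k, hnk, hk⟩ := exists_natCast_le_eq_mul_logDeriv_pow_mul n hmd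
    (fun z hz => by
      rw [hw₀, hw z (hball (sphere_subset_closedBall hz)), norm_div]
      exact div_le_one_of_le₀ (norm_one_sub_le_norm_sub_ofReal hα
        (hG z (sphere_subset_closedBall hz))) (norm_nonneg _))
    hz₀0 (fun h => by simp [h] at hw₀)
  refine ⟨k, hnk, ?_⟩
  have hGz₀d := hGd.differentiableAt (isOpen_ball.mem_nhds hz₀)
  have h1G : 1 - G z₀ ≠ 0 :=
    ne_of_apply_ne re (by rw [sub_re, one_re, zero_re, hGz₀]; linarith)
  rcases eq_or_ne (G z₀) 0 with hG₀ | hG₀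
  · simp [logDeriv_apply, hG₀]
  rw [(logDeriv_congr_nhds (eventuallyEq_of_mem (isOpen_ball.mem_nhds hz₀) hw)).eq_of_nhds,
    logDeriv_div z₀ h1G (hGα z₀ (by simp)) (hGz₀d.const_sub 1) (hGz₀d.sub_const _)] at hk
  simp only [logDeriv_apply, deriv_const_sub, deriv_sub_const] at hk ⊢
  have hα' : (α : ℂ) - 1 ≠ 0 := by exact_mod_cast sub_ne_zero.2 hα.ne
  have hGα₀ := hGα z₀ (by simp)
  rw [← hk]
  field_simp
  ring

theorem half_one_add_lt_re_of_lt_re_mul_logDeriv {α : ℝ} (hα₀ : 0 ≤ α) (hα₁ : α < 1) {n : ℕ}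
    (hn : n ≠ 0) {G v : ℂ → ℂ} (hv : DifferentiableOn ℂ v (ball 0 1))
    (hGv : ∀ z ∈ ball (0 : ℂ) 1, G z = 1 + z ^ n * v z)
    (hG : ∀ z ∈ ball (0 : ℂ) 1, z ≠ 0 → G z ≠ 0 →
      -(n * (1 - α) / (2 * (1 + α))) < (z * logDeriv G z).re) :
    ∀ z ∈ ball (0 : ℂ) 1, (1 + α) / 2 < (G z).re := by
  intro z₁ hz₁
  by_contra! hz₁c
  have hGd : DifferentiableOn ℂ G (ball 0 1) :=
    ((differentiableOn_const 1).add ((differentiable_pow n).differentiableOn.mul hv)).congr hGv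
  have hG₀ : G 0 = 1 := by simp [hGv 0 (mem_ball_self one_pos), hn]
  obtain ⟨z₀, hz₀, hz₀c, hmin⟩ :=
    exists_mem_ball_eq_and_le_on_closedBall (φ := fun z => (G z).re)
      (continuous_re.comp_continuousOn hGd.continuousOn) (by simp only [hG₀, one_re]; linarith)
      hz₁ hz₁c
  have hz₀0 : z₀ ≠ 0 := by rintro rfl; simp only [hG₀, one_re] at hz₀c; linarith
  obtain ⟨k, hnk, hk⟩ :=
    exists_natCast_le_mul_logDeriv_eq_of_re_eq hα₁ hv hGv hz₀ hz₀0 hz₀c hmin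
  have := hG z₀ hz₀ hz₀0 (ne_of_apply_ne re (by rw [hz₀c, zero_re]; linarith))
  rw [hk] at this
  linarith [re_mul_div_le_of_re_eq hα₀ hα₁ (Nat.cast_nonneg n) hnk hz₀c]

theorem mul_logDeriv_const_mul_pow_mul {𝕜 : Type*} [NontriviallyNormedField 𝕜] {G : 𝕜 → 𝕜}
    {c z : 𝕜} (q : ℕ) (hc : c ≠ 0) (hz : z ≠ 0) (hG : DifferentiableAt 𝕜 G z) (hGz : G z ≠ 0) :
    z * logDeriv (fun w => c * w ^ q * G w) z = q + z * logDeriv G z := by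
  rw [logDeriv_mul (f := fun w => c * w ^ q) z (by simp [hc, hz]) hGz (by fun_prop) hG,
    logDeriv_const_mul (f := (· ^ q)) z c hc, logDeriv_pow]
  field_simp

theorem deriv_pow_succ_add_pow_mul {a : ℂ → ℂ} {z : ℂ} (ha : DifferentiableAt ℂ a z) (n q : ℕ) :
    deriv (fun w => w ^ (q + 1) + w ^ (n + (q + 1)) * a w) z =
      (q + 1) * z ^ q * (1 + z ^ n * (((n + q + 1) * a z + z * deriv a z) / (q + 1))) := by
  have hd : HasDerivAt (fun w => w ^ (q + 1) + w ^ (n + (q + 1)) * a w) _ z :=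
    (hasDerivAt_pow (q + 1) z).add ((hasDerivAt_pow (n + (q + 1)) z).mul ha.hasDerivAt)
  rw [hd.deriv, show n + (q + 1) - 1 = n + q by omega, show n + (q + 1) = n + q + 1 by omega]
  push_cast
  field_simp
  ring

theorem stmt_0_general (α : ℝ) (hα0 : 0 ≤ α) (hα1 : α < 1) (p n : ℕ) (hp : 1 ≤ p) (hn : 1 ≤ n)
    (f a : ℂ → ℂ)
    (ha : DifferentiableOn ℂ a (ball 0 1))
    (hform : ∀ z ∈ ball (0:ℂ) 1, f z = z ^ p + z ^ (n + p) * a z)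
    (hre : ∀ z ∈ ball (0:ℂ) 1, z ≠ 0 →
      ((2 * p - n : ℝ) + α * (2 * p + n)) / (2 * (α + 1)) <
        (1 + z * deriv (deriv f) z / deriv f z).re) :
    ∀ z ∈ ball (0:ℂ) 1, z ≠ 0 →
      ((1 + α) / 2 : ℝ) < (deriv f z / (p * z ^ ((p : ℤ) - 1))).re := by
  obtain ⟨q, rfl⟩ : ∃ q, p = q + 1 := ⟨p - 1, by omega⟩
  set v : ℂ → ℂ := fun z => ((n + q + 1) * a z + z * deriv a z) / (q + 1)
  set G : ℂ → ℂ := fun z => 1 + z ^ n * v z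
  have hv : DifferentiableOn ℂ v (ball 0 1) := ((ha.const_mul _).add (differentiableOn_id.mul
    (ha.analyticOnNhd isOpen_ball).deriv.differentiableOn)).div_const _
  have hf' : ∀ z ∈ ball (0 : ℂ) 1, deriv f =ᶠ[𝓝 z] fun w => (q + 1) * w ^ q * G w :=
    fun z hz => eventually_of_mem (isOpen_ball.mem_nhds hz) fun w hw => by
      rw [(eventuallyEq_of_mem (isOpen_ball.mem_nhds hw) hform).deriv_eq,
        deriv_pow_succ_add_pow_mul (ha.differentiableAt (isOpen_ball.mem_nhds hw))]
  have hκ : ((2 * ↑(q + 1) - n : ℝ) + α * (2 * ↑(q + 1) + n)) / (2 * (α + 1)) =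
      q + 1 - n * (1 - α) / (2 * (1 + α)) := by
    field_simp
    push_cast
    ring
  have hGre := half_one_add_lt_re_of_lt_re_mul_logDeriv (G := G) hα0 hα1 (by omega) hv
    (fun _ _ => rfl) fun z hz hz0 hGz => by
      have h := hre z hz hz0
      rw [mul_div_assoc, ← logDeriv_apply, (logDeriv_congr_nhds (hf' z hz)).eq_of_nhds,
        mul_logDeriv_const_mul_pow_mul (G := G) q (Nat.cast_add_one_ne_zero q) hz0
          (((differentiableAt_pow n).mul
            (hv.differentiableAt (isOpen_ball.mem_nhds hz))).const_add 1) hGz, hκ] at h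
      simp only [add_re, one_re, natCast_re] at h
      linarith
  intro z hz hz0
  rw [(hf' z hz).eq_of_nhds, show ((q + 1 : ℕ) : ℤ) - 1 = q by push_cast; ring, zpow_natCast]
  push_cast
  rw [mul_div_cancel_left₀ _ (mul_ne_zero (Nat.cast_add_one_ne_zero q) (pow_ne_zero q hz0))]
  exact hGre z hz

theorem stmt_0 (α : ℝ) (hα0 : 0 ≤ α) (hα1 : α < 1) (p n : ℕ) (hp : 1 ≤ p) (hn : 1 ≤ n)
    (f a : ℂ → ℂ) (hf : DifferentiableOn ℂ f (ball 0 1))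
    (ha : DifferentiableOn ℂ a (ball 0 1))
    (hform : ∀ z ∈ ball (0:ℂ) 1, f z = z ^ p + z ^ (n + p) * a z)
    (hderiv : ∀ z ∈ ball (0:ℂ) 1, z ≠ 0 → deriv f z ≠ 0)
    (hre : ∀ z ∈ ball (0:ℂ) 1, z ≠ 0 →
      ((2 * p - n : ℝ) + α * (2 * p + n)) / (2 * (α + 1)) <
        (1 + z * deriv (deriv f) z / deriv f z).re) :
    ∀ z ∈ ball (0:ℂ) 1, z ≠ 0 →
      ((1 + α) / 2 : ℝ) < (deriv f z / (p * z ^ ((p : ℤ) - 1))).re :=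
  stmt_0_general α hα0 hα1 p n hp hn f a ha hform hre
end

section
/- Let 0 ≤ α < 1, β ≥ 0, γ ≥ 0 with β + γ > 0, and let p, n be positive integers. If f is analytic on the open unit disk D with f(z) = z^p + a_{n+p} z^{n+p} + ⋯ and |f'(z)/(p z^{p−1}) − 1|^β · |f''(z)/z^{p−2} − (p−1) f'(z)/z^{p−1}|^γ < (pn)^γ (1−α)^{β+γ} / 2^{β+2γ} for all z ∈ D, then Re(f'(z)/(p z^{p−1})) > (1+α)/2 for all z ∈ D. -/
/-!
Write `f'(z) = p z^(p-1) (1 + φ z)` with `φ z = z^n u z` and `u` holomorphic on the disc; the two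
quantities in the hypothesis are then `φ z` and `p z φ'(z)`. For `r < 1` let `ζ`, `|ζ| = r`, be a
point where `|u|`, hence `|φ|`, is maximal on the closed disc of radius `r`. Fermat's rule for `|u|²`
in the direction of the origin gives `Re (conj (u ζ) ζ u'(ζ)) ≥ 0`, whence `|ζ φ'(ζ)| ≥ n |φ ζ|`
(Jack's lemma). The hypothesis at `ζ` then forces `|φ ζ| < (1 - α) / 2`, so `|φ| < (1 - α) / 2` on
the disc of radius `r`, and `Re (1 + φ) > (1 + α) / 2` there.
-/

open Complex Metric

open scoped RealInnerProductSpace Topology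

section Radial

variable {E F : Type*} [NormedAddCommGroup E] [NormedSpace ℝ E]
  [NormedAddCommGroup F] [InnerProductSpace ℝ F]

theorem inner_apply_self_nonneg_of_isMaxOn_norm {g : E → F} {g' : E →L[ℝ] F} {s : Set E} {z : E}
    (hs : segment ℝ z 0 ⊆ s) (hmax : IsMaxOn (‖g ·‖) s z) (hg : HasFDerivAt g g' z) :
    0 ≤ ⟪g z, g' z⟫ := by
  have hmax_sq : IsLocalMaxOn (‖g ·‖ ^ 2) s z :=
    IsMaxOn.localize fun y hy => pow_le_pow_left₀ (norm_nonneg _) (hmax hy) 2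
  have := hmax_sq.hasFDerivWithinAt_nonpos hg.norm_sq.hasFDerivWithinAt
    (sub_mem_posTangentConeAt_of_segment_subset hs)
  simpa [inner_neg_right] using this

theorem mul_norm_le_norm_smul_add_of_inner_nonneg {a b : F} (c : ℝ)
    (h : 0 ≤ ⟪a, b⟫) : c * ‖a‖ ≤ ‖c • a + b‖ := by
  rcases (norm_nonneg a).eq_or_lt with ha | ha
  · rw [← ha, mul_zero]; exact norm_nonneg _
  refine le_of_mul_le_mul_left ?_ ha
  calc ‖a‖ * (c * ‖a‖) = c * ⟪a, a⟫ := by rw [real_inner_self_eq_norm_sq]; ring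
    _ ≤ ⟪a, c • a + b⟫ := by rw [inner_add_right, real_inner_smul_right]; linarith
    _ ≤ ‖a‖ * ‖c • a + b‖ := real_inner_le_norm _ _

end Radial

theorem exists_mem_sphere_isMaxOn_norm_pow_mul {u : ℂ → ℂ} {r R : ℝ} (n : ℕ)
    (hu : DifferentiableOn ℂ u (ball 0 R)) (hr : 0 < r) (hrR : r < R) :
    ∃ ζ ∈ sphere (0 : ℂ) r, IsMaxOn (fun z => ‖z ^ n * u z‖) (closedBall 0 r) ζ ∧
      n * ‖ζ ^ n * u ζ‖ ≤ ‖ζ * deriv (fun z => z ^ n * u z) ζ‖ := by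
  obtain ⟨ζ, hζ, hmax⟩ := exists_mem_frontier_isMaxOn_norm isBounded_ball
    ⟨0, mem_ball_self hr⟩ (hu.diffContOnCl_ball (closedBall_subset_ball hrR))
  rw [frontier_ball 0 hr.ne'] at hζ
  rw [closure_ball 0 hr.ne'] at hmax
  have hζr : ‖ζ‖ = r := mem_sphere_zero_iff_norm.1 hζ
  have hu' : HasDerivAt u (deriv u ζ) ζ := (hu.differentiableAt (isOpen_ball.mem_nhds
    (mem_ball_zero_iff.2 (hζr.trans_lt hrR)))).hasDerivAt
  have hradial : 0 ≤ ⟪u ζ, ζ * deriv u ζ⟫ := by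
    simpa using inner_apply_self_nonneg_of_isMaxOn_norm
      ((convex_closedBall 0 r).segment_subset (sphere_subset_closedBall hζ)
        (mem_closedBall_self hr.le)) hmax (hu'.hasFDerivAt.restrictScalars ℝ)
  have hjack : n * ‖u ζ‖ ≤ ‖n * u ζ + ζ * deriv u ζ‖ := by
    simpa using mul_norm_le_norm_smul_add_of_inner_nonneg (n : ℝ) hradial
  have hderiv : ζ * deriv (fun z => z ^ n * u z) ζ = ζ ^ n * (n * u ζ + ζ * deriv u ζ) := by
    rw [((hasDerivAt_pow n ζ).fun_mul hu').deriv]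
    rcases n with _ | k
    · simp
    · rw [Nat.add_sub_cancel]
      ring
  refine ⟨ζ, hζ, fun z hz => ?_, ?_⟩
  · have hz' : ‖z‖ ≤ r := mem_closedBall_zero_iff.1 hz
    have hmax_z : ‖u z‖ ≤ ‖u ζ‖ := hmax hz
    change ‖z ^ n * u z‖ ≤ ‖ζ ^ n * u ζ‖
    rw [norm_mul, norm_mul, norm_pow, norm_pow, hζr]
    gcongr
  · rw [hderiv, norm_mul, norm_mul, norm_pow]
    calc (n : ℝ) * (‖ζ‖ ^ n * ‖u ζ‖) = ‖ζ‖ ^ n * (n * ‖u ζ‖) := by ring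
      _ ≤ ‖ζ‖ ^ n * ‖n * u ζ + ζ * deriv u ζ‖ := by gcongr

theorem deriv_div_zpow_sub_mul_div_zpow {g F : ℂ → ℂ} {z c : ℂ} {m : ℤ} (hz : z ≠ 0)
    (hg : g =ᶠ[𝓝 z] fun w => c * w ^ m * F w) (hF : DifferentiableAt ℂ F z) :
    deriv g z / z ^ (m - 1) - m * g z / z ^ m = c * (z * deriv F z) := by
  rw [hg.deriv_eq, hg.eq_of_nhds,
    ((((hasDerivAt_zpow m z (.inl hz)).const_mul c)).fun_mul hF.hasDerivAt).deriv,
    show z ^ m = z ^ (m - 1) * z by rw [← zpow_add_one₀ hz, sub_add_cancel]]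
  have : z ^ (m - 1) ≠ 0 := zpow_ne_zero _ hz
  field_simp
  ring

noncomputable def derivRemainder (p n : ℕ) (a : ℂ → ℂ) (z : ℂ) : ℂ :=
  ((n + p) * a z + z * deriv a z) / p

theorem differentiableOn_derivRemainder {U : Set ℂ} {a : ℂ → ℂ} (p n : ℕ) (hU : IsOpen U)
    (ha : DifferentiableOn ℂ a U) : DifferentiableOn ℂ (derivRemainder p n a) U :=
  (((ha.const_mul _).add (differentiableOn_id.mul (ha.deriv hU))).div_const _)

theorem hasDerivAt_pow_add_pow_mul {a : ℂ → ℂ} {z : ℂ} {p : ℕ} (n : ℕ) (hp : 1 ≤ p)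
    (ha : DifferentiableAt ℂ a z) :
    HasDerivAt (fun w => w ^ p + w ^ (n + p) * a w)
      (p * z ^ ((p : ℤ) - 1) * (1 + z ^ n * derivRemainder p n a z)) z := by
  obtain ⟨q, rfl⟩ := Nat.exists_eq_add_of_le' hp
  refine ((hasDerivAt_pow _ z).add ((hasDerivAt_pow _ z).fun_mul ha.hasDerivAt)).congr_deriv ?_
  have : (q : ℂ) + 1 ≠ 0 := by exact_mod_cast q.succ_ne_zero
  simp only [derivRemainder, Nat.cast_add, Nat.cast_one, add_sub_cancel_right,
    add_tsub_cancel_right, zpow_natCast, show n + (q + 1) - 1 = n + q by omega]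
  field_simp
  ring

theorem deriv_eq_zpow_mul_one_add {f a : ℂ → ℂ} {U : Set ℂ} {p : ℕ} (n : ℕ) (hp : 1 ≤ p)
    (hU : IsOpen U) (ha : DifferentiableOn ℂ a U)
    (hf : ∀ z ∈ U, f z = z ^ p + z ^ (n + p) * a z) {z : ℂ} (hz : z ∈ U) :
    deriv f z = p * z ^ ((p : ℤ) - 1) * (1 + z ^ n * derivRemainder p n a z) :=
  ((hasDerivAt_pow_add_pow_mul n hp (ha.differentiableAt (hU.mem_nhds hz))).congr_of_eventuallyEq
    (Filter.eventuallyEq_of_mem (hU.mem_nhds hz) hf)).deriv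

section DerivativeIdentities

variable {f a : ℂ → ℂ} {U : Set ℂ} {p : ℕ} (n : ℕ) (hp : 1 ≤ p) (hU : IsOpen U)
  (ha : DifferentiableOn ℂ a U) (hf : ∀ z ∈ U, f z = z ^ p + z ^ (n + p) * a z)
include hp hU ha hf

theorem deriv_div_mul_zpow_sub_one_eq {z : ℂ} (hz : z ∈ U) (hz0 : z ≠ 0) :
    deriv f z / (p * z ^ ((p : ℤ) - 1)) - 1 = z ^ n * derivRemainder p n a z := by
  have hp0 : (p : ℂ) ≠ 0 := by exact_mod_cast (by omega : p ≠ 0)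
  have : z ^ ((p : ℤ) - 1) ≠ 0 := zpow_ne_zero _ hz0
  rw [deriv_eq_zpow_mul_one_add n hp hU ha hf hz]
  field_simp
  ring

theorem deriv_deriv_div_zpow_sub_eq {z : ℂ} (hz : z ∈ U) (hz0 : z ≠ 0) :
    deriv (deriv f) z / z ^ ((p : ℤ) - 2) - (p - 1) * deriv f z / z ^ ((p : ℤ) - 1) =
      p * (z * deriv (fun w => w ^ n * derivRemainder p n a w) z) := by
  have hφ : DifferentiableAt ℂ (fun w => 1 + w ^ n * derivRemainder p n a w) z :=
    (((differentiableOn_pow n).mul (differentiableOn_derivRemainder p n hU ha)).differentiableAt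
      (hU.mem_nhds hz)).const_add 1
  have := deriv_div_zpow_sub_mul_div_zpow hz0
    (Filter.eventuallyEq_of_mem (hU.mem_nhds hz) fun w hw =>
      deriv_eq_zpow_mul_one_add n hp hU ha hf hw) hφ
  rwa [deriv_const_add, show (p : ℤ) - 1 - 1 = (p : ℤ) - 2 by ring, Int.cast_sub,
    Int.cast_natCast, Int.cast_one] at this

end DerivativeIdentities

theorem lt_div_two_of_rpow_mul_rpow_lt {X Y c d β γ : ℝ} (hX : 0 ≤ X) (hc : 0 < c) (hd : 0 ≤ d)
    (hγ : 0 ≤ γ) (hβγ : 0 < β + γ) (hY : c * X ≤ Y)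
    (h : X ^ β * Y ^ γ < c ^ γ * d ^ (β + γ) / 2 ^ (β + 2 * γ)) : X < d / 2 := by
  open Real in
  have hd2 : d ^ (β + γ) / 2 ^ (β + 2 * γ) ≤ (d / 2) ^ (β + γ) := by
    rw [div_rpow hd zero_le_two]
    gcongr
    · norm_num
    · linarith
  have : c ^ γ * X ^ (β + γ) < c ^ γ * (d / 2) ^ (β + γ) := calc
    c ^ γ * X ^ (β + γ) = X ^ β * (c * X) ^ γ := by
      rw [rpow_add' hX hβγ.ne', mul_rpow hc.le hX]; ring
    _ ≤ X ^ β * Y ^ γ := by gcongr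
    _ < c ^ γ * d ^ (β + γ) / 2 ^ (β + 2 * γ) := h
    _ ≤ c ^ γ * (d / 2) ^ (β + γ) := by rw [mul_div_assoc]; gcongr
  exact (rpow_lt_rpow_iff hX (by positivity) hβγ).1 (lt_of_mul_lt_mul_left this (by positivity))

theorem stmt_2_general (α β γ : ℝ) (hα1 : α < 1) (hγ : 0 ≤ γ)
    (hβγ : 0 < β + γ) (p n : ℕ) (hp : 1 ≤ p) (hn : 1 ≤ n)
    (f a : ℂ → ℂ)
    (ha : DifferentiableOn ℂ a (ball 0 1))
    (hform : ∀ z ∈ ball (0:ℂ) 1, f z = z ^ p + z ^ (n + p) * a z)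
    (hineq : ∀ z ∈ ball (0:ℂ) 1, z ≠ 0 →
      ‖deriv f z / (p * z ^ ((p : ℤ) - 1)) - 1‖ ^ β *
        ‖deriv (deriv f) z / z ^ ((p : ℤ) - 2) -
          (p - 1) * deriv f z / z ^ ((p : ℤ) - 1)‖ ^ γ <
        ((p * n : ℝ)) ^ γ * (1 - α) ^ (β + γ) / 2 ^ (β + 2 * γ)) :
    ∀ z ∈ ball (0:ℂ) 1, z ≠ 0 →
      ((1 + α) / 2 : ℝ) < (deriv f z / (p * z ^ ((p : ℤ) - 1))).re := by
  intro z hz hz0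
  have hz1 : ‖z‖ < 1 := mem_ball_zero_iff.1 hz
  obtain ⟨ζ, hζ, hmax, hjack⟩ := exists_mem_sphere_isMaxOn_norm_pow_mul (r := (‖z‖ + 1) / 2) n
    (differentiableOn_derivRemainder p n isOpen_ball ha) (by positivity) (by linarith)
  set φ : ℂ → ℂ := fun w => w ^ n * derivRemainder p n a w
  have hζr : ‖ζ‖ = (‖z‖ + 1) / 2 := mem_sphere_zero_iff_norm.1 hζ
  have hζ1 : ζ ∈ ball (0 : ℂ) 1 := mem_ball_zero_iff.2 (by linarith)
  have hζ0 : ζ ≠ 0 := norm_pos_iff.1 (by rw [hζr]; positivity)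
  have hφζ : ‖φ ζ‖ < (1 - α) / 2 := by
    refine lt_div_two_of_rpow_mul_rpow_lt (c := p * n) (Y := ‖(p : ℂ) * (ζ * deriv φ ζ)‖)
      (norm_nonneg _) (by positivity) (by linarith) hγ hβγ ?_ ?_
    · calc (p * n : ℝ) * ‖φ ζ‖ = p * (n * ‖φ ζ‖) := by ring
        _ ≤ p * ‖ζ * deriv φ ζ‖ := by gcongr
        _ = ‖(p : ℂ) * (ζ * deriv φ ζ)‖ := by rw [norm_mul (p : ℂ), Complex.norm_natCast]
    · simpa only [deriv_div_mul_zpow_sub_one_eq n hp isOpen_ball ha hform hζ1 hζ0,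
        deriv_deriv_div_zpow_sub_eq n hp isOpen_ball ha hform hζ1 hζ0] using hineq ζ hζ1 hζ0
  have hφz : ‖φ z‖ < (1 - α) / 2 :=
    (show ‖φ z‖ ≤ ‖φ ζ‖ from hmax (mem_closedBall_zero_iff.2 (by linarith))).trans_lt hφζ
  rw [eq_add_of_sub_eq' (deriv_div_mul_zpow_sub_one_eq n hp isOpen_ball ha hform hz hz0),
    add_re, one_re]
  linarith [neg_abs_le (φ z).re, abs_re_le_norm (φ z)]

theorem stmt_2 (α β γ : ℝ) (hα0 : 0 ≤ α) (hα1 : α < 1) (hβ : 0 ≤ β) (hγ : 0 ≤ γ)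
    (hβγ : 0 < β + γ) (p n : ℕ) (hp : 1 ≤ p) (hn : 1 ≤ n)
    (f a : ℂ → ℂ) (hf : DifferentiableOn ℂ f (ball 0 1))
    (ha : DifferentiableOn ℂ a (ball 0 1))
    (hform : ∀ z ∈ ball (0:ℂ) 1, f z = z ^ p + z ^ (n + p) * a z)
    (hineq : ∀ z ∈ ball (0:ℂ) 1, z ≠ 0 →
      ‖deriv f z / (p * z ^ ((p : ℤ) - 1)) - 1‖ ^ β *
        ‖deriv (deriv f) z / z ^ ((p : ℤ) - 2) -
          (p - 1) * deriv f z / z ^ ((p : ℤ) - 1)‖ ^ γ <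
        ((p * n : ℝ)) ^ γ * (1 - α) ^ (β + γ) / 2 ^ (β + 2 * γ)) :
    ∀ z ∈ ball (0:ℂ) 1, z ≠ 0 →
      ((1 + α) / 2 : ℝ) < (deriv f z / (p * z ^ ((p : ℤ) - 1))).re :=
  stmt_2_general α β γ hα1 hγ hβγ p n hp hn f a ha hform hineq
end

section
/- Let 0 ≤ α < 1, β ≥ 0, γ ≥ 0 with β + γ > 0, and let p, n be positive integers. If f is analytic on the open unit disk D with f(z) = z^p + a_{n+p} z^{n+p} + ⋯ and |f'(z)/(p z^{p−1}) − 1|^β · |f''(z)/z^{p−2} − (p−1) f'(z)/z^{p−1}|^γ < (pn)^γ |1−α|^{β+γ} for all z ∈ D, then |f'(z)/(p z^{p−1}) − 1| < 1 − α for all z ∈ D. -/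
/-!
Write `f' z = p z^(p-1) (1 + w z)` with `w z = z^n b z` analytic. The first quantity in the
hypothesis is then `w z` and the second is `p z w' z`. If `‖w z‖ ≥ 1 - α` at some `z`, let `z₀`
maximise `‖w‖` on the closed disc of radius `‖z‖`. By Jack's lemma (the Schwarz bound
`‖w (t z₀)‖ ≤ t^n ‖w z₀‖` for `0 ≤ t ≤ 1`, differentiated at `t = 1`),
`‖z₀ w' z₀‖ ≥ n ‖w z₀‖ ≥ n (1 - α)`, so the left-hand side of the hypothesis at `z₀` is at least
`(p n)^γ (1 - α)^(β + γ)`.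
-/

open Complex Metric Filter Set Topology

theorem norm_pow_mul_le_of_forall_mem_sphere {b : ℂ → ℂ} {r M : ℝ} (n : ℕ) (hr : 0 < r)
    (hb : DiffContOnCl ℂ b (ball 0 r)) (hM : ∀ z ∈ sphere (0 : ℂ) r, ‖z ^ n * b z‖ ≤ M)
    {z : ℂ} (hz : z ∈ closedBall 0 r) : ‖z ^ n * b z‖ ≤ M * (‖z‖ / r) ^ n := by
  have hb_le : ‖b z‖ ≤ M / r ^ n := by
    refine norm_le_of_forall_mem_frontier_norm_le isBounded_ball hb (fun ζ hζ => ?_)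
      (by rwa [closure_ball 0 hr.ne'])
    rw [frontier_ball 0 hr.ne'] at hζ
    have := hM ζ hζ
    rw [norm_mul, norm_pow, mem_sphere_zero_iff_norm.mp hζ] at this
    rwa [le_div_iff₀' (by positivity)]
  calc ‖z ^ n * b z‖ = ‖z‖ ^ n * ‖b z‖ := by rw [norm_mul, norm_pow]
    _ ≤ ‖z‖ ^ n * (M / r ^ n) := by gcongr
    _ = M * (‖z‖ / r) ^ n := by rw [div_pow]; ring

theorem natCast_le_re_mul_deriv_div_of_isMaxOn {n : ℕ} {b : ℂ → ℂ} {z₀ : ℂ} (hz₀ : z₀ ≠ 0)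
    (hb : ∀ z ∈ closedBall (0 : ℂ) ‖z₀‖, DifferentiableAt ℂ b z)
    (hmax : IsMaxOn (fun z => ‖z ^ n * b z‖) (closedBall 0 ‖z₀‖) z₀)
    (hw₀ : z₀ ^ n * b z₀ ≠ 0) :
    (n : ℝ) ≤ (z₀ * deriv (fun z => z ^ n * b z) z₀ / (z₀ ^ n * b z₀)).re := by
  set w : ℂ → ℂ := fun z => z ^ n * b z
  have hr : 0 < ‖z₀‖ := norm_pos_iff.mpr hz₀
  have hw_diff : DifferentiableAt ℂ w z₀ :=
    (differentiableAt_pow n).mul (hb z₀ (mem_closedBall_zero_iff.mpr le_rfl))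
  have hbound : ∀ t ∈ Icc (0 : ℝ) 1, (w (t * z₀) / w z₀).re ≤ t ^ n := by
    intro t ht
    have htz : (t : ℂ) * z₀ ∈ closedBall 0 ‖z₀‖ := by
      rw [mem_closedBall_zero_iff, norm_mul, norm_real, Real.norm_of_nonneg ht.1]
      exact mul_le_of_le_one_left hr.le ht.2
    have hb' : DiffContOnCl ℂ b (ball 0 ‖z₀‖) := by
      refine DifferentiableOn.diffContOnCl fun z hz => (hb z ?_).differentiableWithinAt
      rwa [closure_ball 0 hr.ne'] at hz
    have := norm_pow_mul_le_of_forall_mem_sphere n hr hb'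
      (fun z hz => hmax (sphere_subset_closedBall hz)) htz
    have ht_norm : ‖(t : ℂ) * z₀‖ / ‖z₀‖ = t := by
      rw [norm_mul, norm_real, Real.norm_of_nonneg ht.1, mul_div_cancel_right₀ _ hr.ne']
    rw [ht_norm] at this
    calc (w (t * z₀) / w z₀).re ≤ ‖w (t * z₀) / w z₀‖ := re_le_norm _
      _ = ‖w (t * z₀)‖ / ‖w z₀‖ := norm_div _ _
      _ ≤ t ^ n := by
        rw [div_le_iff₀ (norm_pos_iff.mpr hw₀)]
        exact this.trans_eq (mul_comm _ _)
  set c := z₀ * deriv w z₀ / w z₀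
  have hderiv : HasDerivAt (fun t : ℝ => (w (t * z₀) / w z₀).re - t ^ n) (c.re - n) 1 := by
    have h₁ : HasDerivAt (fun ζ : ℂ => ζ * z₀) z₀ 1 := by
      simpa using (hasDerivAt_id (1 : ℂ)).mul_const z₀
    have h₂ : HasDerivAt w (deriv w z₀) (1 * z₀) := by
      rw [one_mul]; exact hw_diff.hasDerivAt
    have h : HasDerivAt (fun ζ : ℂ => w (ζ * z₀) / w z₀) c ((1 : ℝ) : ℂ) := by
      rw [ofReal_one, show c = deriv w z₀ * z₀ / w z₀ by rw [mul_comm]]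
      exact (h₂.comp 1 h₁).div_const (w z₀)
    have := h.real_of_complex.sub (hasDerivAt_pow n (1 : ℝ))
    rwa [one_pow, mul_one] at this
  have hmax₁ : IsLocalMaxOn (fun t : ℝ => (w (t * z₀) / w z₀).re - t ^ n) (Icc 0 1) 1 := by
    refine IsMaxOn.localize fun t ht => ?_
    have hw₀' : w z₀ ≠ 0 := hw₀
    simp only [mem_ofPred_eq, ofReal_one, one_mul, div_self hw₀', one_re, one_pow, sub_self]
    linarith [hbound t ht]
  have hcone : (-1 : ℝ) ∈ posTangentConeAt (Icc (0 : ℝ) 1) 1 := by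
    rw [← zero_sub]
    exact sub_mem_posTangentConeAt_of_segment_subset
      ((segment_symm ℝ _ _).trans_subset (segment_subset_Icc zero_le_one))
  have := hmax₁.hasFDerivWithinAt_nonpos hderiv.hasFDerivAt.hasFDerivWithinAt hcone
  rw [ContinuousLinearMap.toSpanSingleton_apply, neg_smul, one_smul] at this
  linarith

theorem natCast_mul_norm_le_norm_mul_deriv_of_isMaxOn {n : ℕ} {b : ℂ → ℂ} {z₀ : ℂ}
    (hz₀ : z₀ ≠ 0) (hb : ∀ z ∈ closedBall (0 : ℂ) ‖z₀‖, DifferentiableAt ℂ b z)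
    (hmax : IsMaxOn (fun z => ‖z ^ n * b z‖) (closedBall 0 ‖z₀‖) z₀)
    (hw₀ : z₀ ^ n * b z₀ ≠ 0) :
    n * ‖z₀ ^ n * b z₀‖ ≤ ‖z₀ * deriv (fun z => z ^ n * b z) z₀‖ := by
  have hre := natCast_le_re_mul_deriv_div_of_isMaxOn hz₀ hb hmax hw₀
  rw [← le_div_iff₀ (norm_pos_iff.mpr hw₀), ← norm_div]
  exact hre.trans (re_le_norm _)

theorem exists_deriv_eq_mul_one_add_pow_mul {p n : ℕ} (hp : 1 ≤ p) {f a : ℂ → ℂ} {U : Set ℂ}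
    (hU : IsOpen U) (ha : DifferentiableOn ℂ a U)
    (hform : ∀ z ∈ U, f z = z ^ p + z ^ (n + p) * a z) :
    ∃ b : ℂ → ℂ, DifferentiableOn ℂ b U ∧
      ∀ z ∈ U, deriv f z = p * z ^ ((p : ℤ) - 1) * (1 + z ^ n * b z) := by
  obtain ⟨q, rfl⟩ : ∃ q, p = q + 1 := ⟨p - 1, by omega⟩
  have hp₀ : ((q + 1 : ℕ) : ℂ) ≠ 0 := Nat.cast_ne_zero.mpr q.succ_ne_zero
  refine ⟨fun z => ((n + (q + 1) : ℕ) * a z + z * deriv a z) / (q + 1 : ℕ), ?_, fun z hz => ?_⟩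
  · exact ((ha.const_mul _).add (differentiableOn_id.mul
      (ha.analyticOnNhd hU).deriv.differentiableOn)).div_const _
  have hfz : f =ᶠ[𝓝 z] fun y => y ^ (q + 1) + y ^ (n + (q + 1)) * a y :=
    eventually_of_mem (hU.mem_nhds hz) hform
  have hderiv : HasDerivAt (fun y => y ^ (q + 1) + y ^ (n + (q + 1)) * a y) _ z :=
    (hasDerivAt_pow (q + 1) z).add ((hasDerivAt_pow (n + (q + 1)) z).mul
    (ha.differentiableAt (hU.mem_nhds hz)).hasDerivAt)
  rw [hfz.deriv_eq, hderiv.deriv, show ((q + 1 : ℕ) : ℤ) - 1 = q by push_cast; ring,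
    zpow_natCast, Nat.add_sub_cancel, show n + (q + 1) - 1 = n + q by omega]
  field_simp
  ring

section DerivIdentities

variable {f w : ℂ → ℂ} {U : Set ℂ} {p : ℕ}
  (hf' : ∀ z ∈ U, deriv f z = p * z ^ ((p : ℤ) - 1) * (1 + w z))
include hf'

theorem deriv_div_sub_one_eq (hp : p ≠ 0) {z : ℂ} (hz : z ∈ U) (hz₀ : z ≠ 0) :
    deriv f z / (p * z ^ ((p : ℤ) - 1)) - 1 = w z := by
  have : (p : ℂ) * z ^ ((p : ℤ) - 1) ≠ 0 :=
    mul_ne_zero (Nat.cast_ne_zero.mpr hp) (zpow_ne_zero _ hz₀)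
  rw [hf' z hz, mul_div_cancel_left₀ _ this, add_sub_cancel_left]

theorem deriv_deriv_div_sub_eq (hU : IsOpen U) (hw : DifferentiableOn ℂ w U) {z : ℂ} (hz : z ∈ U)
    (hz₀ : z ≠ 0) :
    deriv (deriv f) z / z ^ ((p : ℤ) - 2) - (p - 1) * deriv f z / z ^ ((p : ℤ) - 1) =
      p * (z * deriv w z) := by
  have hfz : deriv f =ᶠ[𝓝 z] fun y => p * y ^ ((p : ℤ) - 1) * (1 + w y) :=
    eventually_of_mem (hU.mem_nhds hz) hf'
  have hderiv : HasDerivAt (fun y => p * y ^ ((p : ℤ) - 1) * (1 + w y)) _ z :=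
    ((hasDerivAt_zpow ((p : ℤ) - 1) z (Or.inl hz₀)).const_mul (p : ℂ)).mul
    ((hw.differentiableAt (hU.mem_nhds hz)).hasDerivAt.const_add 1)
  have hpow : z ^ ((p : ℤ) - 1) = z ^ ((p : ℤ) - 2) * z := by
    rw [← zpow_add_one₀ hz₀]; ring_nf
  rw [hfz.deriv_eq, hderiv.deriv, hf' z hz, hpow, show (p : ℤ) - 1 - 1 = (p : ℤ) - 2 by ring]
  have := zpow_ne_zero ((p : ℤ) - 2) hz₀
  push_cast
  field_simp
  ring

end DerivIdentities

theorem rpow_mul_rpow_add_le_rpow_mul_rpow {A B c s β γ : ℝ} (hβ : 0 ≤ β) (hγ : 0 ≤ γ)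
    (hc : 0 ≤ c) (hs : 0 < s) (hsA : s ≤ A) (hB : c * s ≤ B) :
    c ^ γ * s ^ (β + γ) ≤ A ^ β * B ^ γ :=
  calc c ^ γ * s ^ (β + γ) = s ^ β * (c * s) ^ γ := by
        rw [Real.rpow_add hs, Real.mul_rpow hc hs.le]; ring
    _ ≤ A ^ β * B ^ γ := by
        have := Real.rpow_nonneg (hs.le.trans hsA) β
        gcongr

theorem stmt_3_general (α β γ : ℝ) (hα1 : α < 1) (hβ : 0 ≤ β) (hγ : 0 ≤ γ)
    (p n : ℕ) (hp : 1 ≤ p) (hn : 1 ≤ n)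
    (f a : ℂ → ℂ)
    (ha : DifferentiableOn ℂ a (ball 0 1))
    (hform : ∀ z ∈ ball (0:ℂ) 1, f z = z ^ p + z ^ (n + p) * a z)
    (hineq : ∀ z ∈ ball (0:ℂ) 1, z ≠ 0 →
      ‖deriv f z / (p * z ^ ((p : ℤ) - 1)) - 1‖ ^ β *
        ‖deriv (deriv f) z / z ^ ((p : ℤ) - 2) -
          (p - 1) * deriv f z / z ^ ((p : ℤ) - 1)‖ ^ γ <
        ((p * n : ℝ)) ^ γ * |1 - α| ^ (β + γ)) :
    ∀ z ∈ ball (0:ℂ) 1, z ≠ 0 →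
      ‖deriv f z / (p * z ^ ((p : ℤ) - 1)) - 1‖ < 1 - α := by
  obtain ⟨b, hb, hf'⟩ := exists_deriv_eq_mul_one_add_pow_mul hp isOpen_ball ha hform
  set w : ℂ → ℂ := fun z => z ^ n * b z
  have hw : DifferentiableOn ℂ w (ball 0 1) := (differentiableOn_pow n).mul hb
  have hp₀ : p ≠ 0 := by omega
  have hα : 0 < 1 - α := sub_pos.mpr hα1
  intro z hz hz_ne
  rw [deriv_div_sub_one_eq hf' hp₀ hz hz_ne]
  by_contra! hlarge
  have hsub : closedBall (0 : ℂ) ‖z‖ ⊆ ball 0 1 := closedBall_subset_ball (mem_ball_zero_iff.mp hz)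
  obtain ⟨z₀, hz₀, hmax⟩ := (isCompact_closedBall (0 : ℂ) ‖z‖).exists_isMaxOn
    (nonempty_closedBall.mpr (norm_nonneg z)) (hw.mono hsub).continuousOn.norm
  have hw₀ : 1 - α ≤ ‖w z₀‖ := hlarge.trans (hmax (mem_closedBall_zero_iff.mpr le_rfl))
  have hw₀_ne : w z₀ ≠ 0 := norm_pos_iff.mp (hα.trans_le hw₀)
  have hz₀_ne : z₀ ≠ 0 := by
    rintro rfl
    simp [w, zero_pow (by omega : n ≠ 0)] at hw₀_ne
  have hsub₀ : closedBall (0 : ℂ) ‖z₀‖ ⊆ closedBall 0 ‖z‖ :=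
    closedBall_subset_closedBall (mem_closedBall_zero_iff.mp hz₀)
  have hjack := natCast_mul_norm_le_norm_mul_deriv_of_isMaxOn hz₀_ne
    (fun y hy => hb.differentiableAt (isOpen_ball.mem_nhds (hsub (hsub₀ hy))))
    (hmax.on_subset hsub₀) hw₀_ne
  have h := hineq z₀ (hsub hz₀) hz₀_ne
  rw [deriv_div_sub_one_eq hf' hp₀ (hsub hz₀) hz₀_ne,
    deriv_deriv_div_sub_eq hf' isOpen_ball hw (hsub hz₀) hz₀_ne, abs_of_pos hα] at h
  refine h.not_ge (rpow_mul_rpow_add_le_rpow_mul_rpow hβ hγ (by positivity) hα hw₀ ?_)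
  rw [norm_mul, norm_natCast, mul_assoc]
  gcongr
  exact (mul_le_mul_of_nonneg_left hw₀ n.cast_nonneg).trans hjack

theorem stmt_3 (α β γ : ℝ) (hα0 : 0 ≤ α) (hα1 : α < 1) (hβ : 0 ≤ β) (hγ : 0 ≤ γ)
    (hβγ : 0 < β + γ) (p n : ℕ) (hp : 1 ≤ p) (hn : 1 ≤ n)
    (f a : ℂ → ℂ) (hf : DifferentiableOn ℂ f (ball 0 1))
    (ha : DifferentiableOn ℂ a (ball 0 1))
    (hform : ∀ z ∈ ball (0:ℂ) 1, f z = z ^ p + z ^ (n + p) * a z)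
    (hineq : ∀ z ∈ ball (0:ℂ) 1, z ≠ 0 →
      ‖deriv f z / (p * z ^ ((p : ℤ) - 1)) - 1‖ ^ β *
        ‖deriv (deriv f) z / z ^ ((p : ℤ) - 2) -
          (p - 1) * deriv f z / z ^ ((p : ℤ) - 1)‖ ^ γ <
        ((p * n : ℝ)) ^ γ * |1 - α| ^ (β + γ)) :
    ∀ z ∈ ball (0:ℂ) 1, z ≠ 0 →
      ‖deriv f z / (p * z ^ ((p : ℤ) - 1)) - 1‖ < 1 - α :=
  stmt_3_general α β γ hα1 hβ hγ p n hp hn f a ha hform hineq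
end

section
/- Let 0 ≤ α < 1. If f is analytic on the open unit disk D with f(0) = 0, f'(0) = 1, and Re(1 + z f''(z)/f'(z)) > (1 + 3α)/(2(1+α)) for all z ∈ D, then Re f'(z) > (1+α)/2 for all z ∈ D. -/
/-!
Suppose `Re f' ≤ (1 + α) / 2` somewhere and let `z₀` be a point of least modulus with
`Re f'(z₀) = (1 + α) / 2`. The Möbius map `w = (1 - f') / (f' - α)` sends the half-plane
`Re ≥ (1 + α) / 2` into the closed unit disc and its boundary line onto the unit circle, so
`w(0) = 0` and `|w|` attains its maximum `1` over the closed disc of radius `|z₀|` at `z₀`.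
Jack's lemma (Schwarz's lemma along the radius, a vanishing derivative along the circle) gives
`z₀ w'(z₀) = k w(z₀)` with `k ≥ 1`, which, rewritten in terms of `f'`, says
`Re (1 + z₀ f''(z₀) / f'(z₀)) ≤ (1 + 3α) / (2(1 + α))`.
-/

open Complex ComplexConjugate Metric Set Filter

theorem IsMaxOn.hasDerivAt_nonneg_of_right {g : ℝ → ℝ} {a b d : ℝ} (hab : a < b)
    (h : IsMaxOn g (Icc a b) b) (hg : HasDerivAt g d b) : 0 ≤ d := by
  have hcone : a - b ∈ posTangentConeAt (Icc a b) b :=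
    sub_mem_posTangentConeAt_of_segment_subset
      ((convex_Icc a b).segment_subset (right_mem_Icc.2 hab.le) (left_mem_Icc.2 hab.le))
  have := h.localize.hasFDerivWithinAt_nonpos hg.hasFDerivAt.hasFDerivWithinAt hcone
  simp only [ContinuousLinearMap.toSpanSingleton_apply, smul_eq_mul] at this
  nlinarith

theorem exists_mem_ball_eq_zero_forall_closedBall_nonneg {E : Type*} [NormedAddCommGroup E]
    [NormedSpace ℝ E] [ProperSpace E] {g : E → ℝ} {R : ℝ} {z₁ : E}
    (hg : ContinuousOn g (ball 0 R)) (h0 : 0 < g 0) (hz₁ : z₁ ∈ ball 0 R) (hgz₁ : g z₁ ≤ 0) :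
    ∃ z₀ ∈ ball (0 : E) R, g z₀ = 0 ∧ ∀ z ∈ closedBall (0 : E) ‖z₀‖, 0 ≤ g z := by
  have hsub : closedBall (0 : E) ‖z₁‖ ⊆ ball 0 R := closedBall_subset_ball (mem_ball_zero_iff.1 hz₁)
  have hclosed : ∀ t : Set ℝ, IsClosed t → IsClosed (closedBall (0 : E) ‖z₁‖ ∩ g ⁻¹' t) :=
    fun t ht ↦ (hg.mono hsub).preimage_isClosed_of_isClosed isClosed_closedBall ht
  set K := closedBall (0 : E) ‖z₁‖ ∩ g ⁻¹' Iic 0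
  have hK : IsCompact K :=
    (isCompact_closedBall 0 ‖z₁‖).of_isClosed_subset (hclosed _ isClosed_Iic) inter_subset_left
  obtain ⟨z₀, ⟨hz₀₁, hgz₀⟩, hmin⟩ := hK.exists_isMinOn ⟨z₁, by simp, hgz₁⟩
    continuous_norm.continuousOn
  have hz₀ : z₀ ≠ 0 := by rintro rfl; exact (not_le.2 h0) hgz₀
  have hball : ball (0 : E) ‖z₀‖ ⊆ closedBall 0 ‖z₁‖ ∩ g ⁻¹' Ici 0 := by
    intro z hz
    have hz' : ‖z‖ < ‖z₀‖ := mem_ball_zero_iff.1 hz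
    have hzz₁ : z ∈ closedBall (0 : E) ‖z₁‖ :=
      mem_closedBall_zero_iff.2 (hz'.le.trans (mem_closedBall_zero_iff.1 hz₀₁))
    exact ⟨hzz₁, show 0 ≤ g z from le_of_not_ge fun hgz ↦ hz'.not_ge (hmin ⟨hzz₁, hgz⟩)⟩
  have hnonneg : ∀ z ∈ closedBall (0 : E) ‖z₀‖, 0 ≤ g z := by
    rw [← closure_ball 0 (norm_ne_zero_iff.2 hz₀)]
    exact fun z hz ↦ (closure_minimal hball (hclosed _ isClosed_Ici) hz).2
  exact ⟨z₀, hsub hz₀₁, le_antisymm hgz₀ (hnonneg z₀ (by simp)), hnonneg⟩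

section Jack

variable {w : ℂ → ℂ} {w' z₀ : ℂ}

theorem norm_sq_le_re_mul_deriv_mul_conj (hd : DifferentiableOn ℂ w (ball 0 ‖z₀‖))
    (hw' : HasDerivAt w w' z₀) (hw0 : w 0 = 0)
    (hmax : IsMaxOn (‖w ·‖) (closedBall 0 ‖z₀‖) z₀) :
    ‖w z₀‖ ^ 2 ≤ (z₀ * w' * conj (w z₀)).re := by
  set M := ‖w z₀‖
  have hschwarz : ∀ t ∈ Icc (0 : ℝ) 1, ‖w (t * z₀)‖ ≤ M * t := by
    rintro t ⟨ht0, ht1⟩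
    rcases ht1.lt_or_eq with ht1 | rfl
    · have hmaps : MapsTo w (ball 0 ‖z₀‖) (closedBall (w 0) M) := fun z hz ↦ by
        simpa [hw0] using hmax (ball_subset_closedBall hz)
      rcases eq_or_ne z₀ 0 with rfl | hz₀
      · simpa [hw0] using mul_nonneg (norm_nonneg _) ht0
      have hnorm : ‖(t : ℂ) * z₀‖ = t * ‖z₀‖ := by simp [abs_of_nonneg ht0]
      have hz : (t : ℂ) * z₀ ∈ ball 0 ‖z₀‖ := by
        rw [mem_ball_zero_iff, hnorm]
        exact mul_lt_of_lt_one_left (norm_pos_iff.2 hz₀) ht1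
      have := Complex.dist_le_div_mul_dist_of_mapsTo_ball hd hmaps hz
      rw [dist_zero_right, hw0, dist_zero_right, hnorm] at this
      refine this.trans_eq ?_
      field_simp [norm_ne_zero_iff.2 hz₀]
    · simp [M]
  have hline : HasDerivAt (fun t : ℝ ↦ w (t * z₀)) (z₀ * w') 1 := by
    have := (hasDerivAt_mul_const (x := ((1 : ℝ) : ℂ)) z₀).comp_ofReal
    exact hw'.scomp_of_eq 1 this (by simp) |>.congr_deriv (by simp)
  have hG : HasDerivAt (fun t : ℝ ↦ ‖w (t * z₀)‖ ^ 2 - M ^ 2 * t ^ 2)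
      (2 * (z₀ * w' * conj (w z₀)).re - 2 * M ^ 2) 1 := by
    refine (hline.norm_sq.sub ((hasDerivAt_pow 2 (1 : ℝ)).const_mul (M ^ 2))).congr_deriv ?_
    simp only [ofReal_one, one_mul, Complex.inner, mul_re, conj_re, mul_im, conj_im]
    ring
  have hGmax : IsMaxOn (fun t : ℝ ↦ ‖w (t * z₀)‖ ^ 2 - M ^ 2 * t ^ 2) (Icc 0 1) 1 := by
    intro t ht
    have := pow_le_pow_left₀ (norm_nonneg _) (hschwarz t ht) 2
    show ‖w (t * z₀)‖ ^ 2 - M ^ 2 * t ^ 2 ≤ ‖w ((1 : ℝ) * z₀)‖ ^ 2 - M ^ 2 * 1 ^ 2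
    rw [ofReal_one, one_mul]
    nlinarith
  linarith [hGmax.hasDerivAt_nonneg_of_right zero_lt_one hG]

theorem im_mul_deriv_mul_conj_eq_zero (hw' : HasDerivAt w w' z₀)
    (hmax : IsMaxOn (‖w ·‖) (closedBall 0 ‖z₀‖) z₀) :
    (z₀ * w' * conj (w z₀)).im = 0 := by
  have hcircle : HasDerivAt (fun s : ℝ ↦ exp (s * I) * z₀) (I * z₀) 0 := by
    have := ((hasDerivAt_mul_const I).cexp.mul_const z₀).comp_ofReal (z := 0)
    simpa using this
  have hH : HasDerivAt (fun s : ℝ ↦ ‖w (exp (s * I) * z₀)‖ ^ 2)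
      (-2 * (z₀ * w' * conj (w z₀)).im) 0 := by
    refine (hw'.scomp_of_eq 0 hcircle (by simp)).norm_sq.congr_deriv ?_
    simp only [Function.comp_apply, ofReal_zero, zero_mul, exp_zero, one_mul, smul_eq_mul,
      Complex.inner, mul_re, I_re, I_im, mul_im, conj_re, conj_im]
    ring
  have hloc : IsLocalMax (fun s : ℝ ↦ ‖w (exp (s * I) * z₀)‖ ^ 2) 0 :=
    Eventually.of_forall fun s ↦ by
      have := hmax (a := exp (s * I) * z₀) (by simp [norm_exp_ofReal_mul_I])
      simp only [mem_ofPred_eq, ofReal_zero, zero_mul, exp_zero, one_mul] at this ⊢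
      exact pow_le_pow_left₀ (norm_nonneg _) this 2
  linarith [hloc.hasDerivAt_eq_zero hH]

theorem jack_lemma (hd : DifferentiableOn ℂ w (ball 0 ‖z₀‖)) (hw' : HasDerivAt w w' z₀)
    (hw0 : w 0 = 0) (hwz₀ : w z₀ ≠ 0) (hmax : IsMaxOn (‖w ·‖) (closedBall 0 ‖z₀‖) z₀) :
    ∃ k : ℝ, 1 ≤ k ∧ z₀ * w' = k * w z₀ := by
  set c := z₀ * w' * conj (w z₀)
  have hc : c = (c.re : ℂ) :=
    Complex.ext rfl ((im_mul_deriv_mul_conj_eq_zero hw' hmax).trans (ofReal_im _).symm)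
  have hM : 0 < ‖w z₀‖ ^ 2 := by positivity
  refine ⟨c.re / ‖w z₀‖ ^ 2,
    (one_le_div hM).2 (norm_sq_le_re_mul_deriv_mul_conj hd hw' hw0 hmax), ?_⟩
  have hcw : c * w z₀ = z₀ * w' * (‖w z₀‖ ^ 2 : ℝ) := by
    simp only [c, mul_assoc, conj_mul', ofReal_pow]
  rw [ofReal_div, ← hc, div_mul_eq_mul_div, eq_div_iff (ofReal_ne_zero.2 hM.ne'), hcw]

end Jack

section Mobius

theorem normSq_sub_ofReal_sub_normSq_one_sub (α : ℝ) (P : ℂ) :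
    normSq (P - α) - normSq (1 - P) = 2 * (1 - α) * (P.re - (1 + α) / 2) := by
  simp only [normSq_apply, sub_re, ofReal_re, sub_im, ofReal_im, one_re, one_im]
  ring

variable {α : ℝ} {P : ℂ}

theorem sub_ofReal_ne_zero_of_le_re (hα : α < 1) (hP : (1 + α) / 2 ≤ P.re) : P - α ≠ 0 := by
  intro h
  have := congrArg re h
  simp only [sub_re, ofReal_re, zero_re] at this
  linarith

theorem norm_one_sub_div_sub_ofReal_le_one (hα : α < 1) (hP : (1 + α) / 2 ≤ P.re) :
    ‖(1 - P) / (P - α)‖ ≤ 1 := by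
  rw [norm_div, div_le_one (norm_pos_iff.2 (sub_ofReal_ne_zero_of_le_re hα hP)),
    ← sq_le_sq₀ (norm_nonneg _) (norm_nonneg _), ← normSq_eq_norm_sq, ← normSq_eq_norm_sq]
  nlinarith [normSq_sub_ofReal_sub_normSq_one_sub α P]

theorem norm_one_sub_div_sub_ofReal_eq_one (hα : α < 1) (hP : P.re = (1 + α) / 2) :
    ‖(1 - P) / (P - α)‖ = 1 := by
  rw [norm_div, div_eq_one_iff_eq (norm_ne_zero_iff.2 (sub_ofReal_ne_zero_of_le_re hα hP.ge)),
    ← sq_eq_sq₀ (norm_nonneg _) (norm_nonneg _), ← normSq_eq_norm_sq, ← normSq_eq_norm_sq]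
  have h := normSq_sub_ofReal_sub_normSq_one_sub α P
  rw [hP, sub_self, mul_zero] at h
  linarith

theorem hasDerivAt_one_sub_div_sub {p : ℂ → ℂ} {p' a z : ℂ} (hp : HasDerivAt p p' z)
    (ha : p z - a ≠ 0) :
    HasDerivAt (fun z ↦ (1 - p z) / (p z - a)) (-(1 - a) * p' / (p z - a) ^ 2) z := by
  refine ((hp.const_sub 1).div (hp.sub_const a) ha).congr_deriv ?_
  field_simp
  ring

end Mobius

theorem re_one_add_div_le {α k : ℝ} (hα0 : 0 ≤ α) (hα1 : α < 1) (hk : 1 ≤ k) {P Q : ℂ}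
    (hP : P.re = (1 + α) / 2) (hQ : (1 - α) * Q = -k * ((1 - P) * (P - α))) :
    (1 + Q / P).re ≤ (1 + 3 * α) / (2 * (1 + α)) := by
  set δ := (1 + α) / 2
  have hδ : 0 < δ := by positivity
  have hP0 : P ≠ 0 := fun h ↦ by simp only [h, zero_re] at hP; linarith
  have hn : δ ^ 2 ≤ normSq P := by rw [normSq_apply, hP]; nlinarith [mul_self_nonneg P.im]
  have hQP : Q / P = (-k / (1 - α) : ℝ) * (1 + α - P - α / P) := by
    have : (1 - (α : ℂ)) ≠ 0 := by exact_mod_cast (sub_pos.2 hα1).ne'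
    push_cast
    field_simp
    linear_combination hQ
  have hre : (1 + α - P - α / P).re = δ - α * δ / normSq P := by
    simp only [sub_re, add_re, one_re, ofReal_re, hP, div_re, ofReal_im, zero_mul, zero_div]
    ring
  -- the worst case is `P = δ`, where `δ - α / δ = (1 - α) ^ 2 / (2 * (1 + α))`
  have hA : (1 - α) ^ 2 / (2 * (1 + α)) ≤ δ - α * δ / normSq P := by
    have : α * δ / normSq P ≤ α / δ := by
      rw [div_le_div_iff₀ (normSq_pos.2 hP0) hδ]; nlinarith
    have : δ - α / δ = (1 - α) ^ 2 / (2 * (1 + α)) := by field_simp; ring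
    linarith
  have hkA : (1 - α) / (2 * (1 + α)) ≤ k / (1 - α) * (δ - α * δ / normSq P) := by
    rw [div_mul_eq_mul_div, le_div_iff₀ (sub_pos.2 hα1)]
    calc (1 - α) / (2 * (1 + α)) * (1 - α) = (1 - α) ^ 2 / (2 * (1 + α)) := by ring
      _ ≤ 1 * (δ - α * δ / normSq P) := by linarith
      _ ≤ k * (δ - α * δ / normSq P) := by
        have : 0 ≤ (1 - α) ^ 2 / (2 * (1 + α)) := by positivity
        gcongr; linarith
  have h3α : 1 - (1 - α) / (2 * (1 + α)) = (1 + 3 * α) / (2 * (1 + α)) := by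
    field_simp; ring
  rw [add_re, one_re, hQP, re_ofReal_mul, hre, neg_div, neg_mul]
  linarith

theorem exists_one_le_sub_mul_mul_deriv_eq {p : ℂ → ℂ} {α : ℝ} {z₀ : ℂ} (hα : α < 1)
    (hp : ∀ z ∈ closedBall 0 ‖z₀‖, HasDerivAt p (deriv p z) z) (hp0 : p 0 = 1)
    (hpz₀ : (p z₀).re = (1 + α) / 2) (hpge : ∀ z ∈ closedBall 0 ‖z₀‖, (1 + α) / 2 ≤ (p z).re) :
    ∃ k : ℝ, 1 ≤ k ∧ (1 - α) * (z₀ * deriv p z₀) = -k * ((1 - p z₀) * (p z₀ - α)) := by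
  set w := fun z ↦ (1 - p z) / (p z - α)
  have hw' : ∀ z ∈ closedBall 0 ‖z₀‖, HasDerivAt w (-(1 - α) * deriv p z / (p z - α) ^ 2) z :=
    fun z hz ↦ hasDerivAt_one_sub_div_sub (hp z hz) (sub_ofReal_ne_zero_of_le_re hα (hpge z hz))
  have hwz₀ : ‖w z₀‖ = 1 := norm_one_sub_div_sub_ofReal_eq_one hα hpz₀
  have hmax : IsMaxOn (‖w ·‖) (closedBall 0 ‖z₀‖) z₀ := fun z hz ↦
    (norm_one_sub_div_sub_ofReal_le_one hα (hpge z hz)).trans hwz₀.ge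
  obtain ⟨k, hk, hjack⟩ := jack_lemma
    (fun z hz ↦ (hw' z (ball_subset_closedBall hz)).differentiableAt.differentiableWithinAt)
    (hw' z₀ (by simp)) (by simp [w, hp0]) (by simp [← norm_ne_zero_iff, hwz₀]) hmax
  refine ⟨k, hk, ?_⟩
  have := sub_ofReal_ne_zero_of_le_re hα hpz₀.ge
  simp only [w] at hjack
  field_simp at hjack
  linear_combination -hjack

theorem stmt_5_general (α : ℝ) (hα0 : 0 ≤ α) (hα1 : α < 1)
    (f : ℂ → ℂ) (hf : DifferentiableOn ℂ f (ball 0 1))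
    (hf'0 : deriv f 0 = 1)
    (hre : ∀ z ∈ ball (0:ℂ) 1,
      (1 + 3 * α) / (2 * (1 + α)) < (1 + z * deriv (deriv f) z / deriv f z).re) :
    ∀ z ∈ ball (0:ℂ) 1, (1 + α) / 2 < (deriv f z).re := by
  by_contra! hbad
  obtain ⟨z₁, hz₁, hz₁le⟩ := hbad
  set p := deriv f
  have hp : DifferentiableOn ℂ p (ball 0 1) :=
    (hf.analyticOnNhd isOpen_ball).deriv.differentiableOn
  obtain ⟨z₀, hz₀, hpz₀, hpge⟩ := exists_mem_ball_eq_zero_forall_closedBall_nonneg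
    (g := fun z ↦ (p z).re - (1 + α) / 2)
    ((continuous_re.comp_continuousOn hp.continuousOn).sub continuousOn_const)
    (by simp [p, hf'0]; linarith) hz₁ (by simpa using hz₁le)
  have hsub : closedBall (0 : ℂ) ‖z₀‖ ⊆ ball 0 1 := closedBall_subset_ball (mem_ball_zero_iff.1 hz₀)
  obtain ⟨k, hk, hQ⟩ := exists_one_le_sub_mul_mul_deriv_eq hα1
    (fun z hz ↦ (hp.differentiableAt (isOpen_ball.mem_nhds (hsub hz))).hasDerivAt) hf'0
    (sub_eq_zero.1 hpz₀) (fun z hz ↦ sub_nonneg.1 (hpge z hz))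
  exact (hre z₀ hz₀).not_ge (re_one_add_div_le hα0 hα1 hk (sub_eq_zero.1 hpz₀) hQ)

theorem stmt_5 (α : ℝ) (hα0 : 0 ≤ α) (hα1 : α < 1)
    (f : ℂ → ℂ) (hf : DifferentiableOn ℂ f (ball 0 1))
    (hf0 : f 0 = 0) (hf'0 : deriv f 0 = 1)
    (hf'ne : ∀ z ∈ ball (0:ℂ) 1, deriv f z ≠ 0)
    (hre : ∀ z ∈ ball (0:ℂ) 1,
      (1 + 3 * α) / (2 * (1 + α)) < (1 + z * deriv (deriv f) z / deriv f z).re) :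
    ∀ z ∈ ball (0:ℂ) 1, (1 + α) / 2 < (deriv f z).re :=
  stmt_5_general α hα0 hα1 f hf hf'0 hre
end

section
/- Let 0 ≤ α < 1. If f is analytic on the open unit disk D with f(0) = 0, f'(0) = 1, and Re(1 + z f''(z)/f'(z)) < (3 + 2α)/(2 + α) for all z ∈ D, then |f'(z) − 1| < 1 + α for all z ∈ D. -/
/-!
Jack's lemma: if `q` is holomorphic with `q 0 = 0` and `‖q‖` attains its maximum over the closed
disc of radius `‖z₀‖` at `z₀`, then `z₀ q'(z₀) = k q(z₀)` for a real `k ≥ 1`. After rescaling to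
`φ w = q (w z₀) / q z₀` this is the boundary Schwarz lemma `φ'(1) ≥ 1`: Schwarz gives
`Re φ t ≤ t` along the radius, forcing `Re φ'(1) ≥ 1`, and `Re φ ≤ 1` on the unit circle with
equality at `1` forces `Im φ'(1) = 0`.

If `‖f' - 1‖` reached `1 + α`, take `z₀` maximising `‖q‖`, `q = f' - 1`, on a closed disc. Then
`1 + z₀ f''(z₀) / f'(z₀) = 1 + k q / (1 + q)` with `‖q‖ ≥ 1 + α`, and its real part is at least
`1 + ‖q‖ / (1 + ‖q‖) ≥ (3 + 2α) / (2 + α)`.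
-/

open Complex Metric Set Filter Topology

theorem one_le_re_deriv_of_re_le {φ : ℂ → ℂ} (hφ : DifferentiableAt ℂ φ 1) (h1 : φ 1 = 1)
    (hle : ∀ t ∈ Ioo (0 : ℝ) 1, (φ t).re ≤ t) : 1 ≤ (deriv φ 1).re := by
  have hF : HasDerivAt (fun t : ℝ => (φ t).re) (deriv φ 1).re (1 : ℝ) := by
    simpa using (ofReal_one ▸ hφ.hasDerivAt).real_of_complex
  refine ge_of_tendsto ((hasDerivAt_iff_tendsto_slope.1 hF).mono_left
    (nhdsLT_le_nhdsNE 1)) ?_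
  filter_upwards [Ioo_mem_nhdsLT zero_lt_one] with t ht
  rw [slope_def_field, le_div_iff_of_neg (by linarith [ht.2])]
  simpa [h1] using hle t ht

theorem im_deriv_eq_zero_of_re_le_one {φ : ℂ → ℂ} (hφ : DifferentiableAt ℂ φ 1) (h1 : φ 1 = 1)
    (hle : ∀ θ : ℝ, (φ (exp (θ * I))).re ≤ 1) : (deriv φ 1).im = 0 := by
  have hexp : HasDerivAt (fun w : ℂ => exp (w * I)) I 0 := by
    simpa using ((hasDerivAt_id (0 : ℂ)).mul_const I).cexp
  have hG : HasDerivAt (fun θ : ℝ => (φ (exp (θ * I))).re) (deriv φ 1 * I).re 0 := by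
    have := (by simpa using hφ.hasDerivAt : HasDerivAt φ (deriv φ 1) (exp (0 * I))).comp 0 hexp
    simpa using this.real_of_complex
  have hmax : IsLocalMax (fun θ : ℝ => (φ (exp (θ * I))).re) 0 :=
    Eventually.of_forall fun θ => by simpa [h1] using hle θ
  simpa using hmax.hasDerivAt_eq_zero hG

theorem exists_one_le_deriv_eq_ofReal_of_mapsTo_closedBall {φ : ℂ → ℂ}
    (hφ : ∀ w ∈ closedBall (0 : ℂ) 1, DifferentiableAt ℂ φ w)
    (hmaps : MapsTo φ (closedBall 0 1) (closedBall 0 1)) (h0 : φ 0 = 0) (h1 : φ 1 = 1) :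
    ∃ k : ℝ, 1 ≤ k ∧ deriv φ 1 = k := by
  have hφ1 : DifferentiableAt ℂ φ 1 := hφ 1 (by simp)
  have hradial : ∀ t ∈ Ioo (0 : ℝ) 1, (φ t).re ≤ t := fun t ht => by
    have hschwarz := norm_le_norm_of_mapsTo_ball
      (fun w hw => (hφ w (ball_subset_closedBall hw)).differentiableWithinAt)
      (hmaps.mono_left ball_subset_closedBall) h0 (z := (t : ℂ))
      (by simpa [abs_of_pos ht.1] using ht.2)
    calc (φ t).re ≤ ‖φ t‖ := re_le_norm _
      _ ≤ t := by simpa [abs_of_pos ht.1] using hschwarz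
  have hcircle : ∀ θ : ℝ, (φ (exp (θ * I))).re ≤ 1 := fun θ =>
    (re_le_norm _).trans (by simpa using hmaps (by simp : exp (θ * I) ∈ closedBall (0 : ℂ) 1))
  refine ⟨(deriv φ 1).re, one_le_re_deriv_of_re_le hφ1 h1 hradial, ?_⟩
  exact Complex.ext (by simp) (by simp [im_deriv_eq_zero_of_re_le_one hφ1 h1 hcircle])

theorem exists_one_le_mul_deriv_eq_of_isMaxOn_norm {q : ℂ → ℂ} {z₀ : ℂ}
    (hq : ∀ z ∈ closedBall (0 : ℂ) ‖z₀‖, DifferentiableAt ℂ q z) (hq0 : q 0 = 0)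
    (hqz₀ : q z₀ ≠ 0) (hmax : IsMaxOn (‖q ·‖) (closedBall 0 ‖z₀‖) z₀) :
    ∃ k : ℝ, 1 ≤ k ∧ z₀ * deriv q z₀ = k * q z₀ := by
  set φ : ℂ → ℂ := fun w => q (w * z₀) / q z₀ with hφ
  have hscale : ∀ w ∈ closedBall (0 : ℂ) 1, w * z₀ ∈ closedBall (0 : ℂ) ‖z₀‖ := fun w hw => by
    simpa using mul_le_of_le_one_left (norm_nonneg z₀) (mem_closedBall_zero_iff.1 hw)
  have hφdiff : ∀ w ∈ closedBall (0 : ℂ) 1, HasDerivAt φ (deriv q (w * z₀) * z₀ / q z₀) w :=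
    fun w hw => by
      simpa using (((hq _ (hscale w hw)).hasDerivAt.comp w
        ((hasDerivAt_id w).mul_const z₀)).div_const (q z₀))
  have hmaps : MapsTo φ (closedBall 0 1) (closedBall 0 1) := fun w hw => by
    simpa [hφ, norm_div, div_le_one (norm_pos_iff.2 hqz₀)] using hmax (hscale w hw)
  obtain ⟨k, hk, hderiv⟩ := exists_one_le_deriv_eq_ofReal_of_mapsTo_closedBall
    (fun w hw => (hφdiff w hw).differentiableAt) hmaps (by simp [hφ, hq0])
    (by simp [hφ, hqz₀])
  refine ⟨k, hk, ?_⟩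
  rw [← hderiv, (hφdiff 1 (by simp)).deriv]
  field_simp

theorem norm_div_one_add_norm_le_re_div_one_add {w : ℂ} (hw : 1 ≤ ‖w‖) (hw1 : 1 + w ≠ 0) :
    ‖w‖ / (1 + ‖w‖) ≤ (w / (1 + w)).re := by
  have hR : ‖w‖ ^ 2 = w.re ^ 2 + w.im ^ 2 := by
    rw [← normSq_eq_norm_sq, normSq_apply]; ring
  have hx : w.re ≤ ‖w‖ := re_le_norm w
  have hden : 0 < normSq (1 + w) := normSq_pos.2 hw1
  rw [div_re, ← add_div, div_le_div_iff₀ (by positivity) hden, normSq_apply]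
  simp only [add_re, add_im, one_re, one_im, zero_add]
  nlinarith [mul_nonneg (sub_nonneg.2 hw) (sub_nonneg.2 hx)]

theorem le_re_one_add_mul_div_one_add {α k : ℝ} {w : ℂ} (hα : 0 ≤ α) (hk : 1 ≤ k)
    (hw : 1 + α ≤ ‖w‖) (hw1 : 1 + w ≠ 0) :
    (3 + 2 * α) / (2 + α) ≤ (1 + k * w / (1 + w)).re := by
  have hbase := norm_div_one_add_norm_le_re_div_one_add (by linarith) hw1
  have hmono : (1 + α) / (2 + α) ≤ ‖w‖ / (1 + ‖w‖) := by
    rw [div_le_div_iff₀ (by linarith) (by positivity)]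
    nlinarith
  have hpos : 0 ≤ (w / (1 + w)).re := le_trans (by positivity) hbase
  calc (3 + 2 * α) / (2 + α) = 1 + (1 + α) / (2 + α) := by field_simp; ring
    _ ≤ 1 + k * (w / (1 + w)).re := by nlinarith
    _ = (1 + k * w / (1 + w)).re := by
      rw [mul_div_assoc, add_re, one_re, re_ofReal_mul]

theorem stmt_6_general (α : ℝ) (hα0 : 0 ≤ α)
    (f : ℂ → ℂ) (hf : DifferentiableOn ℂ f (ball 0 1))
    (hf'0 : deriv f 0 = 1)
    (hf'ne : ∀ z ∈ ball (0:ℂ) 1, deriv f z ≠ 0)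
    (hre : ∀ z ∈ ball (0:ℂ) 1,
      (1 + z * deriv (deriv f) z / deriv f z).re < (3 + 2 * α) / (2 + α)) :
    ∀ z ∈ ball (0:ℂ) 1, ‖deriv f z - 1‖ < 1 + α := by
  intro z₁ hz₁
  by_contra! hge
  set q : ℂ → ℂ := fun z => deriv f z - 1 with hq
  have hdiff : ∀ z ∈ ball (0 : ℂ) 1, DifferentiableAt ℂ q z := fun z hz =>
    ((hf.analyticOnNhd isOpen_ball).deriv z hz).differentiableAt.sub_const 1
  have hsub : closedBall (0 : ℂ) ‖z₁‖ ⊆ ball 0 1 := closedBall_subset_ball (by simpa using hz₁)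
  obtain ⟨z₀, hz₀, hmax⟩ := (isCompact_closedBall (0 : ℂ) ‖z₁‖).exists_isMaxOn
    (nonempty_closedBall.2 (norm_nonneg _))
    fun z hz => (hdiff z (hsub hz)).continuousAt.norm.continuousWithinAt
  have hqz₀ : 1 + α ≤ ‖q z₀‖ := hge.trans (hmax (by simp))
  have hsub₀ : closedBall (0 : ℂ) ‖z₀‖ ⊆ closedBall 0 ‖z₁‖ :=
    closedBall_subset_closedBall (by simpa using hz₀)
  obtain ⟨k, hk, hjack⟩ := exists_one_le_mul_deriv_eq_of_isMaxOn_norm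
    (fun z hz => hdiff z (hsub (hsub₀ hz))) (by simp [hq, hf'0]) (norm_pos_iff.1 (by linarith))
    (hmax.on_subset hsub₀)
  have hf' : deriv f z₀ = 1 + q z₀ := by simp [hq]
  have hf'' : z₀ * deriv (deriv f) z₀ = k * q z₀ := by
    rw [← hjack, hq, deriv_sub_const]
  have hlt := hre z₀ (hsub hz₀)
  rw [hf'', hf'] at hlt
  exact (le_re_one_add_mul_div_one_add hα0 hk hqz₀ (hf' ▸ hf'ne z₀ (hsub hz₀))).not_gt hlt

theorem stmt_6 (α : ℝ) (hα0 : 0 ≤ α) (hα1 : α < 1)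
    (f : ℂ → ℂ) (hf : DifferentiableOn ℂ f (ball 0 1))
    (hf0 : f 0 = 0) (hf'0 : deriv f 0 = 1)
    (hf'ne : ∀ z ∈ ball (0:ℂ) 1, deriv f z ≠ 0)
    (hre : ∀ z ∈ ball (0:ℂ) 1,
      (1 + z * deriv (deriv f) z / deriv f z).re < (3 + 2 * α) / (2 + α)) :
    ∀ z ∈ ball (0:ℂ) 1, ‖deriv f z - 1‖ < 1 + α :=
  stmt_6_general α hα0 f hf hf'0 hf'ne hre
end

section
/- Let 0 ≤ α < 1 and β, γ ≥ 0 with β + γ > 0. If f is analytic on the open unit disk D with f(0) = 0, f'(0) = 1, and |f'(z) − 1|^β · |z f''(z)|^γ < (1−α)^{β+γ} / 2^{β+2γ} for all z ∈ D, then Re f'(z) > (1+α)/2 for all z ∈ D. -/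
/-!
Put `g = f' - 1`, so `g 0 = 0`, and `r = (1 - α) / 2`. It suffices that `‖g‖ < r` on the disk.
Otherwise take a point `z₀` of least modulus with `‖g z₀‖ ≥ r` (a weak form of Jack's lemma):
the Schwarz lemma on the disk of radius `‖z₀‖` gives `‖g (t z₀)‖ ≤ r t` for `0 < t < 1`, so the
radial derivative satisfies `‖z₀ g'(z₀)‖ ≥ r`. Then the left side of the hypothesis at `z₀` is at
least `r ^ (β + γ) ≥ (1 - α) ^ (β + γ) / 2 ^ (β + 2γ)`, a contradiction.
-/

open Complex Metric Set Filter Topology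

lemma exists_le_norm_forall_norm_lt_of_le_norm {E F : Type*} [NormedAddCommGroup E] [ProperSpace E]
    [SeminormedAddCommGroup F] {g : E → F} {R r : ℝ} (hg : ContinuousOn g (ball 0 R)) {w : E}
    (hw : w ∈ ball 0 R) (hwr : r ≤ ‖g w‖) :
    ∃ z ∈ ball (0 : E) R, r ≤ ‖g z‖ ∧ ∀ y, ‖y‖ < ‖z‖ → ‖g y‖ < r := by
  have hsub : closedBall (0 : E) ‖w‖ ⊆ ball 0 R :=
    closedBall_subset_ball (by simpa using hw)
  set K := closedBall (0 : E) ‖w‖ ∩ g ⁻¹' {x | r ≤ ‖x‖}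
  have hK : IsCompact K :=
    (isCompact_closedBall 0 ‖w‖).of_isClosed_subset
      ((hg.mono hsub).preimage_isClosed_of_isClosed isClosed_closedBall
        (isClosed_le continuous_const continuous_norm)) inter_subset_left
  obtain ⟨z, ⟨hzw, hzr⟩, hmin⟩ :=
    hK.exists_isMinOn ⟨w, by simp, hwr⟩ continuous_norm.continuousOn
  refine ⟨z, hsub hzw, hzr, fun y hy => ?_⟩
  by_contra! hyr
  have hyw : y ∈ closedBall (0 : E) ‖w‖ := by
    rw [mem_closedBall_zero_iff] at hzw ⊢
    exact hy.le.trans hzw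
  exact hy.not_ge (hmin ⟨hyw, hyr⟩)

lemma le_norm_of_hasDerivAt_of_mul_sub_le {F : Type*} [NormedAddCommGroup F] [NormedSpace ℝ F]
    {φ : ℝ → F} {φ' : F} {a c : ℝ} (hφ : HasDerivAt φ φ' a)
    (h : ∀ᶠ t in 𝓝[<] a, c * (a - t) ≤ ‖φ a - φ t‖) : c ≤ ‖φ'‖ := by
  have hslope : Tendsto (fun t => ‖slope φ a t‖) (𝓝[<] a) (𝓝 ‖φ'‖) :=
    ((hasDerivAt_iff_tendsto_slope.mp hφ).mono_left
      (nhdsWithin_mono a fun t ht => ne_of_lt ht)).norm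
  refine ge_of_tendsto hslope ?_
  filter_upwards [h, self_mem_nhdsWithin] with t ht hta
  have hpos : 0 < a - t := sub_pos.mpr hta
  rw [slope_def_module, norm_smul, norm_inv, Real.norm_eq_abs, abs_sub_comm,
    abs_of_pos hpos, norm_sub_rev, inv_mul_eq_div, le_div_iff₀ hpos]
  exact ht

theorem exists_le_norm_and_le_norm_smul_deriv {E : Type*} [NormedAddCommGroup E]
    [NormedSpace ℂ E] {g : ℂ → E} {R r : ℝ}
    (hg : DifferentiableOn ℂ g (ball 0 R)) (hg0 : g 0 = 0) (hr : 0 < r) {w : ℂ}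
    (hw : w ∈ ball 0 R) (hwr : r ≤ ‖g w‖) :
    ∃ z ∈ ball (0 : ℂ) R, r ≤ ‖g z‖ ∧ r ≤ ‖z • deriv g z‖ := by
  obtain ⟨z, hz, hzr, hmin⟩ :=
    exists_le_norm_forall_norm_lt_of_le_norm hg.continuousOn hw hwr
  refine ⟨z, hz, hzr, ?_⟩
  have hρ : 0 < ‖z‖ := norm_pos_iff.mpr fun h => by simp [h, hg0] at hzr; linarith
  have hschwarz : ∀ y ∈ ball (0 : ℂ) ‖z‖, ‖g y‖ ≤ r / ‖z‖ * ‖y‖ := fun y hy => by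
    have hmaps : MapsTo g (ball 0 ‖z‖) (closedBall (g 0) r) := fun y hy => by
      simpa [hg0] using (hmin y (mem_ball_zero_iff.mp hy)).le
    have hzR : ‖z‖ ≤ R := (mem_ball_zero_iff.mp hz).le
    simpa [hg0] using
      dist_le_div_mul_dist_of_mapsTo_ball (hg.mono (ball_subset_ball hzR)) hmaps hy
  have hderiv : HasDerivAt (fun t : ℝ => g (t * z)) (z • deriv g z) 1 := by
    have hgz : HasDerivAt g (deriv g z) ((fun t : ℝ => (t : ℂ) * z) 1) := by
      simpa using (hg.differentiableAt (isOpen_ball.mem_nhds hz)).hasDerivAt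
    have hray : HasDerivAt (fun t : ℝ => (t : ℂ) * z) z 1 := by
      simpa using (hasDerivAt_id (1 : ℝ)).ofReal_comp.mul_const z
    exact hgz.scomp 1 hray
  refine le_norm_of_hasDerivAt_of_mul_sub_le hderiv ?_
  filter_upwards [Ioo_mem_nhdsLT (zero_lt_one' ℝ)] with t ⟨ht0, ht1⟩
  have hty : ‖g (t * z)‖ ≤ r * t := by
    have hnorm : ‖(t : ℂ) * z‖ = t * ‖z‖ := by simp [abs_of_pos ht0]
    calc ‖g (t * z)‖ ≤ r / ‖z‖ * (t * ‖z‖) := hnorm ▸ hschwarz _ (by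
          rw [mem_ball_zero_iff, hnorm]; nlinarith)
      _ = r * t := by field_simp
  calc r * (1 - t) ≤ ‖g z‖ - ‖g (t * z)‖ := by nlinarith
    _ ≤ ‖g ((1 : ℝ) * z) - g (t * z)‖ := by simpa using norm_sub_norm_le (g z) (g (t * z))

lemma rpow_div_two_pow_le_half_rpow_mul_half_rpow {x β γ : ℝ} (hx : 0 < x) (hγ : 0 ≤ γ) :
    x ^ (β + γ) / 2 ^ (β + 2 * γ) ≤ (x / 2) ^ β * (x / 2) ^ γ := by
  rw [← Real.rpow_add (by positivity), Real.div_rpow hx.le zero_le_two]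
  gcongr
  · exact one_le_two
  · linarith

theorem stmt_7_general (α β γ : ℝ) (hα1 : α < 1) (hβ : 0 ≤ β) (hγ : 0 ≤ γ)
    (f : ℂ → ℂ) (hf : DifferentiableOn ℂ f (ball 0 1))
    (hf'0 : deriv f 0 = 1)
    (hineq : ∀ z ∈ ball (0:ℂ) 1,
      ‖deriv f z - 1‖ ^ β * ‖z * deriv (deriv f) z‖ ^ γ <
        (1 - α) ^ (β + γ) / 2 ^ (β + 2 * γ)) :
    ∀ z ∈ ball (0:ℂ) 1, (1 + α) / 2 < (deriv f z).re := by
  have hr : 0 < (1 - α) / 2 := by linarith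
  have hg : DifferentiableOn ℂ (fun z => deriv f z - 1) (ball 0 1) :=
    (hf.analyticOnNhd isOpen_ball).deriv.differentiableOn.sub_const 1
  have hbound : ∀ z ∈ ball (0 : ℂ) 1, ‖deriv f z - 1‖ < (1 - α) / 2 := by
    intro w hw
    by_contra! hwr
    obtain ⟨z, hz, hgz, hdgz⟩ :=
      exists_le_norm_and_le_norm_smul_deriv hg (by simp [hf'0]) hr hw hwr
    rw [deriv_sub_const, smul_eq_mul] at hdgz
    have hge := mul_le_mul (Real.rpow_le_rpow hr.le hgz hβ) (Real.rpow_le_rpow hr.le hdgz hγ)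
      (by positivity) (by positivity)
    linarith [hineq z hz, rpow_div_two_pow_le_half_rpow_mul_half_rpow (β := β) (sub_pos.mpr hα1) hγ]
  intro z hz
  have hre := neg_lt_of_abs_lt ((abs_re_le_norm _).trans_lt (hbound z hz))
  rw [sub_re, one_re] at hre
  linarith

theorem stmt_7 (α β γ : ℝ) (hα0 : 0 ≤ α) (hα1 : α < 1) (hβ : 0 ≤ β) (hγ : 0 ≤ γ)
    (hβγ : 0 < β + γ)
    (f : ℂ → ℂ) (hf : DifferentiableOn ℂ f (ball 0 1))
    (hf0 : f 0 = 0) (hf'0 : deriv f 0 = 1)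
    (hineq : ∀ z ∈ ball (0:ℂ) 1,
      ‖deriv f z - 1‖ ^ β * ‖z * deriv (deriv f) z‖ ^ γ <
        (1 - α) ^ (β + γ) / 2 ^ (β + 2 * γ)) :
    ∀ z ∈ ball (0:ℂ) 1, (1 + α) / 2 < (deriv f z).re :=
  stmt_7_general α β γ hα1 hβ hγ f hf hf'0 hineq
end

section
/- Let 1 < λ < 3. Suppose f is analytic on the open unit disk D with f(0) = 0, f'(0) = 1, and Re(1 + z f''(z)/f'(z)) < (5λ−1)/(2(λ+1)) when 1 < λ ≤ 2, and Re(1 + z f''(z)/f'(z)) < (λ+1)/(2(λ−1)) when 2 < λ < 3, for all z ∈ D. Then z f'(z)/f(z) is subordinate to λ(1−z)/(λ−z) on D. -/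
/-!
Write `p z = z f'(z) / f(z)` and `q z = λ (1 - z) / (λ - z)`. For `λ > 1`, `q` maps the unit disk
onto `D = {c | ‖λ (c - 1)‖ < ‖c - λ‖}` with inverse `c ↦ λ (c - 1) / (c - λ)`, and `p 0 = 1 = q 0`,
so it suffices to show that `p` stays in `D`. Otherwise let `z₀` be a point of least modulus
with `p z₀ ∈ ∂D`. Then `w = q⁻¹ ∘ p` satisfies `‖w‖ ≤ 1 = ‖w z₀‖` on `‖z‖ ≤ ‖z₀‖`, so Jack's
lemma gives `z₀ w'(z₀) = K w(z₀)` with `K ≥ 1`. As `1 + z f''/f' = p + z p'/p`, at `z₀` this is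
`q u + K u q'(u) / q u` with `‖u‖ = 1`, whose real part is at least the bound of the hypothesis.

Jack's lemma itself comes from Schwarz's lemma: along the radius `‖w‖²` grows at least like
`‖z‖²` up to `z₀`, while along the circle `‖z‖ = ‖z₀‖` it is maximal at `z₀`.
-/

open Complex Metric Filter Topology Set
open scoped ComplexConjugate

theorem HasDerivAt.le_of_le_of_eq_left {u v : ℝ → ℝ} {u' v' x : ℝ} (hu : HasDerivAt u u' x)
    (hv : HasDerivAt v v' x) (hx : u x = v x) (hle : ∀ t < x, u t ≤ v t) : v' ≤ u' := by
  have hmax : IsLocalMaxOn (u - v) (Iic x) x :=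
    Filter.eventually_of_mem self_mem_nhdsWithin fun t ht => by
      rcases (mem_Iic.1 ht).lt_or_eq with h | rfl
      · simpa [hx] using hle t h
      · simp
  have hy : (-1 : ℝ) ∈ posTangentConeAt (Iic x) x := by
    refine mem_posTangentConeAt_of_segment_subset fun t ht => ?_
    rw [segment_eq_uIcc, uIcc_of_ge (by linarith)] at ht
    exact ht.2
  have := hmax.hasFDerivWithinAt_nonpos (hu.sub hv).hasFDerivAt.hasFDerivWithinAt hy
  simpa using this

theorem hasDerivAt_norm_sq_comp_exp_mul {w : ℂ → ℂ} {z₀ : ℂ} (hw : DifferentiableAt ℂ w z₀)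
    (c : ℂ) :
    HasDerivAt (fun t : ℝ => ‖w (exp (t * c) * z₀)‖ ^ 2)
      (2 * inner ℝ (w z₀) (c * (z₀ * deriv w z₀))) 0 := by
  have hγ : HasDerivAt (fun s : ℂ => exp (s * c) * z₀) (c * z₀) ((0 : ℝ) : ℂ) := by
    simpa using (((hasDerivAt_id ((0 : ℝ) : ℂ)).mul_const c).cexp).mul_const z₀
  have hw' : HasDerivAt w (deriv w z₀) (exp (((0 : ℝ) : ℂ) * c) * z₀) := by
    simpa using hw.hasDerivAt
  have h := (hw'.comp 0 hγ.comp_ofReal).norm_sq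
  simp only [Function.comp_apply, ofReal_zero, zero_mul, Complex.exp_zero, one_mul] at h
  rwa [mul_comm (deriv w z₀), mul_assoc] at h

theorem eq_ofReal_mul_of_inner_I_mul_eq_zero {a ζ : ℂ} (ha : a ≠ 0)
    (h : inner ℝ a (I * ζ) = 0) : ζ = ((inner ℝ a ζ / ‖a‖ ^ 2 : ℝ) : ℂ) * a := by
  have hreal : ζ * conj a = (inner ℝ a ζ : ℂ) := by
    apply Complex.ext
    · simp [Complex.inner]
    · simp only [Complex.inner, mul_re, I_re, I_im, conj_re, conj_im, mul_im] at h
      simp only [Complex.inner, mul_im, conj_re, conj_im, ofReal_im]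
      linarith
  have hnorm : a * conj a = ((‖a‖ ^ 2 : ℝ) : ℂ) := by
    rw [mul_conj, normSq_eq_norm_sq, ofReal_pow]
  have ha' : ((‖a‖ ^ 2 : ℝ) : ℂ) ≠ 0 := by exact_mod_cast (by positivity : ‖a‖ ^ 2 ≠ 0)
  have hc : conj a ≠ 0 := (map_ne_zero _).2 ha
  rw [ofReal_div, ← hreal, ← hnorm]
  field_simp

theorem jack_lemma_s8 {w : ℂ → ℂ} {z₀ : ℂ} (hw : DifferentiableOn ℂ w (ball 0 ‖z₀‖))
    (hw₀ : DifferentiableAt ℂ w z₀) (hw0 : w 0 = 0) (hwz₀ : w z₀ ≠ 0)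
    (hmax : ∀ z, ‖z‖ ≤ ‖z₀‖ → ‖w z‖ ≤ ‖w z₀‖) :
    ∃ K : ℝ, 1 ≤ K ∧ z₀ * deriv w z₀ = K * w z₀ := by
  have hr : 0 < ‖z₀‖ := norm_pos_iff.2 fun h => hwz₀ (h ▸ hw0)
  have hschwarz : ∀ z, ‖z‖ < ‖z₀‖ → ‖w z‖ ≤ ‖w z₀‖ / ‖z₀‖ * ‖z‖ := by
    intro z hz
    have hmaps : MapsTo w (ball 0 ‖z₀‖) (closedBall (w 0) ‖w z₀‖) := fun z hz => by
      simpa [hw0] using hmax z (mem_ball_zero_iff.1 hz).le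
    simpa [hw0] using
      Complex.dist_le_div_mul_dist_of_mapsTo_ball hw hmaps (mem_ball_zero_iff.2 hz)
  have hradial : ‖w z₀‖ ^ 2 ≤ inner ℝ (w z₀) (z₀ * deriv w z₀) := by
    have hv : HasDerivAt (fun t : ℝ => ‖w z₀‖ ^ 2 * Real.exp (2 * t)) (2 * ‖w z₀‖ ^ 2) 0 := by
      simpa [mul_comm] using (((hasDerivAt_id (0 : ℝ)).const_mul 2).exp).const_mul (‖w z₀‖ ^ 2)
    have := (hasDerivAt_norm_sq_comp_exp_mul hw₀ 1).le_of_le_of_eq_left hv (by simp) fun t ht => by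
      have hnorm : ‖exp (t * 1) * z₀‖ = Real.exp t * ‖z₀‖ := by
        simp [norm_exp]
      have hlt : ‖exp (t * 1) * z₀‖ < ‖z₀‖ := by
        rw [hnorm]; exact mul_lt_of_lt_one_left hr (Real.exp_lt_one_iff.2 ht)
      have h : ‖w (exp (t * 1) * z₀)‖ ≤ Real.exp t * ‖w z₀‖ :=
        (hschwarz _ hlt).trans_eq (by rw [hnorm]; field_simp)
      calc ‖w (exp (t * 1) * z₀)‖ ^ 2 ≤ (Real.exp t * ‖w z₀‖) ^ 2 := by gcongr
        _ = ‖w z₀‖ ^ 2 * Real.exp (2 * t) := by rw [two_mul, Real.exp_add]; ring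
    simpa using this
  have hangular : inner ℝ (w z₀) (I * (z₀ * deriv w z₀)) = 0 := by
    have hmax' : IsLocalMax (fun t : ℝ => ‖w (exp (t * I) * z₀)‖ ^ 2) 0 :=
      Eventually.of_forall fun t => by
        simpa using pow_le_pow_left₀ (norm_nonneg _) (hmax _ (by simp [norm_exp])) 2
    simpa using hmax'.hasDerivAt_eq_zero (hasDerivAt_norm_sq_comp_exp_mul hw₀ I)
  exact ⟨_, (one_le_div (by positivity)).2 hradial,
    eq_ofReal_mul_of_inner_I_mul_eq_zero hwz₀ hangular⟩

theorem exists_eq_zero_nonpos_on_closedBall {φ : ℂ → ℝ} {R : ℝ} (hφ : ContinuousOn φ (ball 0 R))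
    (h0 : φ 0 < 0) {z₁ : ℂ} (hz₁ : z₁ ∈ ball 0 R) (h₁ : 0 ≤ φ z₁) :
    ∃ z₀ ∈ ball (0 : ℂ) R, φ z₀ = 0 ∧ ∀ z, ‖z‖ ≤ ‖z₀‖ → φ z ≤ 0 := by
  have hsub : closedBall (0 : ℂ) ‖z₁‖ ⊆ ball 0 R := closedBall_subset_ball (mem_ball_zero_iff.1 hz₁)
  set S := closedBall (0 : ℂ) ‖z₁‖ ∩ φ ⁻¹' Ici 0
  have hS : IsCompact S :=
    (isCompact_closedBall 0 _).of_isClosed_subset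
      ((hφ.mono hsub).preimage_isClosed_of_isClosed isClosed_closedBall isClosed_Ici)
      inter_subset_left
  obtain ⟨z₀, ⟨hz₀₁, hz₀⟩, hmin⟩ :=
    hS.exists_isMinOn ⟨z₁, by simp [S, h₁]⟩ continuous_norm.continuousOn
  have hz₀₁ : ‖z₀‖ ≤ ‖z₁‖ := mem_closedBall_zero_iff.1 hz₀₁
  have hlt : ∀ z, ‖z‖ < ‖z₀‖ → φ z < 0 := fun z hz => by
    by_contra! h
    exact hz.not_ge (hmin ⟨mem_closedBall_zero_iff.2 (hz.le.trans hz₀₁), h⟩)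
  have hr : ‖z₀‖ ≠ 0 := fun h => (h0.trans_le (norm_eq_zero.1 h ▸ hz₀)).false
  have hle : ∀ z, ‖z‖ ≤ ‖z₀‖ → φ z ≤ 0 := fun z hz => by
    have hzcl : z ∈ closure (ball (0 : ℂ) ‖z₀‖) := by
      rwa [closure_ball _ hr, mem_closedBall_zero_iff]
    refine ContinuousWithinAt.closure_le hzcl ?_ continuousWithinAt_const
      fun y hy => (hlt y (mem_ball_zero_iff.1 hy)).le
    exact (hφ.continuousAt (isOpen_ball.mem_nhds (hsub (mem_closedBall_zero_iff.2
      (hz.trans hz₀₁))))).continuousWithinAt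
  exact ⟨z₀, hsub (mem_closedBall_zero_iff.2 hz₀₁), le_antisymm (hle z₀ le_rfl) hz₀, hle⟩

theorem add_mul_deriv_div_self_of_eventuallyEq_comp {p q W : ℂ → ℂ} {z₀ K : ℂ}
    (hq : DifferentiableAt ℂ q (W z₀)) (hW : DifferentiableAt ℂ W z₀)
    (hpW : p =ᶠ[𝓝 z₀] q ∘ W) (hK : z₀ * deriv W z₀ = K * W z₀) :
    p z₀ + z₀ * deriv p z₀ / p z₀ = q (W z₀) + K * W z₀ * deriv q (W z₀) / q (W z₀) := by
  rw [hpW.eq_of_nhds, hpW.deriv_eq, deriv_comp z₀ hq hW, Function.comp_apply, ← hK]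
  ring

theorem re_div_one_sub_of_norm_eq_one {u : ℂ} (hu : ‖u‖ = 1) (hu1 : u ≠ 1) :
    (u / (1 - u)).re = -1 / 2 := by
  have hxy := sq_norm_sub_sq_re u
  rw [hu, one_pow] at hxy
  have hne : normSq (1 - u) ≠ 0 := normSq_eq_zero.not.2 (sub_ne_zero.2 hu1.symm)
  rw [div_re, ← add_div, div_eq_iff hne, normSq_apply]
  simp only [sub_re, one_re, sub_im, one_im]
  linear_combination (1 / 2 : ℝ) * hxy

theorem re_inv_sub_mem_Icc {lam : ℝ} {u : ℂ} (hlam : 1 < lam) (hu : ‖u‖ = 1) :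
    ((lam - u)⁻¹).re ∈ Icc (1 / (lam + 1)) (1 / (lam - 1)) := by
  have hxy := sq_norm_sub_sq_re u
  rw [hu, one_pow] at hxy
  have hx : -1 ≤ u.re ∧ u.re ≤ 1 := ⟨by nlinarith, by nlinarith⟩
  have hN : normSq (lam - u) = lam ^ 2 - 2 * lam * u.re + 1 := by
    rw [normSq_apply]; simp only [sub_re, ofReal_re, sub_im, ofReal_im]; linear_combination -hxy
  have hpos : 0 < lam ^ 2 - 2 * lam * u.re + 1 := by nlinarith
  rw [inv_re, hN]
  simp only [sub_re, ofReal_re]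
  constructor
  · rw [div_le_div_iff₀ (by linarith) hpos]; nlinarith
  · rw [div_le_div_iff₀ hpos (by linarith)]; nlinarith

noncomputable def mobius (lam : ℝ) (z : ℂ) : ℂ := lam * (1 - z) / (lam - z)

noncomputable def mobiusInv (lam : ℝ) (c : ℂ) : ℂ := lam * (c - 1) / (c - lam)

theorem mobius_mobiusInv {lam : ℝ} (hlam₀ : lam ≠ 0) (hlam₁ : lam ≠ 1) {c : ℂ} (hc : c ≠ lam) :
    mobius lam (mobiusInv lam c) = c := by
  have hc' : c - lam ≠ 0 := sub_ne_zero.2 hc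
  have h1 : (1 : ℂ) - lam ≠ 0 := sub_ne_zero.2 (by exact_mod_cast hlam₁.symm)
  have h0 : (lam : ℂ) ≠ 0 := by exact_mod_cast hlam₀
  have e1 : 1 - mobiusInv lam c = c * (1 - lam) / (c - lam) := by
    unfold mobiusInv; field_simp; ring
  have e2 : lam - mobiusInv lam c = lam * (1 - lam) / (c - lam) := by
    unfold mobiusInv; field_simp; ring
  rw [mobius, e1, e2]
  field_simp

theorem hasDerivAt_mobius {lam : ℝ} {z : ℂ} (hz : z ≠ lam) :
    HasDerivAt (mobius lam) (lam * (1 - lam) / (lam - z) ^ 2) z := by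
  have hz' : (lam : ℂ) - z ≠ 0 := sub_ne_zero.2 (Ne.symm hz)
  have h := (((hasDerivAt_id z).const_sub 1).const_mul (lam : ℂ)).div
    ((hasDerivAt_id z).const_sub (lam : ℂ)) hz'
  exact h.congr_deriv (by simp only [id]; ring)

theorem differentiableAt_mobiusInv {lam : ℝ} {c : ℂ} (hc : c ≠ lam) :
    DifferentiableAt ℂ (mobiusInv lam) c :=
  (differentiableAt_const _ |>.mul (differentiableAt_id.sub_const 1)).div
    (differentiableAt_id.sub_const _) (sub_ne_zero.2 hc)

theorem ne_ofReal_of_norm_eq_one {lam : ℝ} {u : ℂ} (hlam : 1 < lam) (hu : ‖u‖ = 1) : u ≠ lam := by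
  rintro rfl
  rw [Complex.norm_of_nonneg (by linarith)] at hu
  linarith

theorem ne_ofReal_of_norm_mul_sub_one_le {lam : ℝ} (hlam : 1 < lam) {c : ℂ}
    (h : ‖lam * (c - 1)‖ ≤ ‖c - lam‖) : c ≠ lam := by
  rintro rfl
  have : lam * (lam - 1) ≤ 0 := by
    simpa [← ofReal_one, ← ofReal_sub, abs_of_pos (by linarith : 0 < lam),
      abs_of_pos (by linarith : 0 < lam - 1)] using h
  nlinarith

theorem norm_mobiusInv_le_one_iff {lam : ℝ} {c : ℂ} (hc : c ≠ lam) :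
    ‖mobiusInv lam c‖ ≤ 1 ↔ ‖lam * (c - 1)‖ ≤ ‖c - lam‖ := by
  rw [mobiusInv, norm_div, div_le_one (norm_pos_iff.2 (sub_ne_zero.2 hc))]

theorem norm_mobiusInv_lt_one_iff {lam : ℝ} {c : ℂ} (hc : c ≠ lam) :
    ‖mobiusInv lam c‖ < 1 ↔ ‖lam * (c - 1)‖ < ‖c - lam‖ := by
  rw [mobiusInv, norm_div, div_lt_one (norm_pos_iff.2 (sub_ne_zero.2 hc))]

/-- The infimum of `Re (q u + K u q'(u) / q u)` over `‖u‖ = 1`, `u ≠ 1`, `K ≥ 1`, approached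
at `K = 1` as `u → -1` if `lam ≤ 2` and as `u → 1` if `lam > 2`. -/
noncomputable def reBound (lam : ℝ) : ℝ :=
  if lam ≤ 2 then (5 * lam - 1) / (2 * (lam + 1)) else (lam + 1) / (2 * (lam - 1))

theorem reBound_le {lam s K : ℝ} (hlam : 1 < lam) (hs : s ∈ Icc (1 / (lam + 1)) (1 / (lam - 1)))
    (hK : 1 ≤ K) : reBound lam ≤ lam - lam * (lam - 1) * s + K * (lam * s - 1 / 2) := by
  obtain ⟨hs₁, hs₂⟩ := hs
  rw [div_le_iff₀' (by linarith)] at hs₁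
  rw [le_div_iff₀' (by linarith)] at hs₂
  have hK' : lam * s - 1 / 2 ≤ K * (lam * s - 1 / 2) := by
    apply le_mul_of_one_le_left _ hK
    nlinarith
  unfold reBound
  split_ifs with h
  · rw [div_le_iff₀ (by linarith)]
    nlinarith [mul_nonneg (mul_nonneg (by linarith : (0:ℝ) ≤ lam) (by linarith : 0 ≤ 2 - lam))
      (by linarith : 0 ≤ (lam + 1) * s - 1)]
  · rw [div_le_iff₀ (by linarith)]
    nlinarith [mul_nonneg (mul_nonneg (by linarith : (0:ℝ) ≤ lam) (by linarith : 0 ≤ lam - 2))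
      (by linarith : 0 ≤ 1 - (lam - 1) * s)]

theorem reBound_le_re_mobius {lam K : ℝ} {u : ℂ} (hlam : 1 < lam) (hu : ‖u‖ = 1) (hu1 : u ≠ 1)
    (hK : 1 ≤ K) :
    reBound lam ≤ (mobius lam u + K * u * deriv (mobius lam) u / mobius lam u).re := by
  have hul : (lam : ℂ) - u ≠ 0 := sub_ne_zero.2 (ne_ofReal_of_norm_eq_one hlam hu).symm
  have h1u : (1 : ℂ) - u ≠ 0 := sub_ne_zero.2 hu1.symm
  have h0 : (lam : ℂ) ≠ 0 := by exact_mod_cast (by linarith : lam ≠ 0)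
  have hsplit : mobius lam u + K * u * deriv (mobius lam) u / mobius lam u
      = lam - lam * (lam - 1) * (lam - u)⁻¹ + K * (lam * (lam - u)⁻¹ - 1 - u / (1 - u)) := by
    rw [(hasDerivAt_mobius (ne_ofReal_of_norm_eq_one hlam hu)).deriv]
    unfold mobius
    field_simp
    ring
  rw [hsplit]
  have hre : (lam * (lam - 1) : ℂ).im = 0 := by simp
  simp only [add_re, sub_re, ofReal_re, mul_re, ofReal_im, zero_mul, sub_zero, one_re, hre,
    re_div_one_sub_of_norm_eq_one hu hu1]
  linarith [reBound_le hlam (re_inv_sub_mem_Icc hlam hu) hK]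

theorem norm_mul_sub_one_lt_of_re_lt {lam : ℝ} (hlam : 1 < lam) {p : ℂ → ℂ}
    (hp : DifferentiableOn ℂ p (ball 0 1)) (hp0 : p 0 = 1) (hpne : ∀ z ∈ ball (0 : ℂ) 1, p z ≠ 0)
    (hre : ∀ z ∈ ball (0 : ℂ) 1, (p z + z * deriv p z / p z).re < reBound lam) :
    ∀ z ∈ ball (0 : ℂ) 1, ‖lam * (p z - 1)‖ < ‖p z - lam‖ := by
  by_contra! ⟨z₁, hz₁, h₁⟩
  have hpc := hp.continuousOn
  obtain ⟨z₀, hz₀, hφz₀, hφ⟩ := exists_eq_zero_nonpos_on_closedBall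
    (φ := fun z => ‖lam * (p z - 1)‖ - ‖p z - lam‖) (by fun_prop)
    (by simpa [hp0] using sub_ne_zero.2 (ofReal_ne_one.2 hlam.ne').symm) hz₁ (sub_nonneg.2 h₁)
  have hball : ∀ z, ‖z‖ ≤ ‖z₀‖ → z ∈ ball (0 : ℂ) 1 := fun z hz =>
    mem_ball_zero_iff.2 (hz.trans_lt (mem_ball_zero_iff.1 hz₀))
  have hplam : ∀ z, ‖z‖ ≤ ‖z₀‖ → p z ≠ lam := fun z hz =>
    ne_ofReal_of_norm_mul_sub_one_le hlam (sub_nonpos.1 (hφ z hz))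
  set W := fun z => mobiusInv lam (p z)
  have hW : ∀ z, ‖z‖ ≤ ‖z₀‖ → DifferentiableAt ℂ W z := fun z hz =>
    (differentiableAt_mobiusInv (hplam z hz)).comp z
      (hp.differentiableAt (isOpen_ball.mem_nhds (hball z hz)))
  have hWz₀ : ‖W z₀‖ = 1 := by
    rw [show W z₀ = mobiusInv lam (p z₀) from rfl, mobiusInv, norm_div, sub_eq_zero.1 hφz₀,
      div_self (norm_ne_zero_iff.2 (sub_ne_zero.2 (hplam z₀ le_rfl)))]
  obtain ⟨K, hK, hjack⟩ := jack_lemma_s8 (w := W)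
    (fun z hz => (hW z (mem_ball_zero_iff.1 hz).le).differentiableWithinAt) (hW z₀ le_rfl)
    (by simp [W, mobiusInv, hp0]) (norm_ne_zero_iff.1 (hWz₀ ▸ one_ne_zero))
    fun z hz => hWz₀ ▸ (norm_mobiusInv_le_one_iff (hplam z hz)).2 (sub_nonpos.1 (hφ z hz))
  have hpW : p =ᶠ[𝓝 z₀] mobius lam ∘ W := by
    filter_upwards [(hpc.continuousAt (isOpen_ball.mem_nhds hz₀)).eventually_ne
      (hplam z₀ le_rfl)] with z hz
    exact (mobius_mobiusInv (by linarith) hlam.ne' hz).symm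
  have hW1 : W z₀ ≠ 1 := fun h => hpne z₀ hz₀ <| by
    rw [hpW.eq_of_nhds, Function.comp_apply, h, mobius, sub_self, mul_zero, zero_div]
  have := add_mul_deriv_div_self_of_eventuallyEq_comp
    (hasDerivAt_mobius (ne_ofReal_of_norm_eq_one hlam hWz₀)).differentiableAt (hW z₀ le_rfl)
    hpW hjack
  exact (hre z₀ hz₀).not_ge (this ▸ reBound_le_re_mobius hlam hWz₀ hW1 hK)

theorem exists_mobius_subordination {lam : ℝ} (hlam : 1 < lam) {p : ℂ → ℂ}
    (hp : DifferentiableOn ℂ p (ball 0 1)) (hp0 : p 0 = 1)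
    (hD : ∀ z ∈ ball (0 : ℂ) 1, ‖lam * (p z - 1)‖ < ‖p z - lam‖) :
    ∃ w : ℂ → ℂ, DifferentiableOn ℂ w (ball 0 1) ∧ w 0 = 0 ∧
      (∀ z ∈ ball (0 : ℂ) 1, w z ∈ ball (0 : ℂ) 1) ∧
      ∀ z ∈ ball (0 : ℂ) 1, p z = mobius lam (w z) := by
  have hplam : ∀ z ∈ ball (0 : ℂ) 1, p z ≠ lam := fun z hz =>
    ne_ofReal_of_norm_mul_sub_one_le hlam (hD z hz).le
  refine ⟨fun z => mobiusInv lam (p z), fun z hz => ?_, by simp [mobiusInv, hp0],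
    fun z hz => mem_ball_zero_iff.2 ((norm_mobiusInv_lt_one_iff (hplam z hz)).2 (hD z hz)),
    fun z hz => (mobius_mobiusInv (by linarith) hlam.ne' (hplam z hz)).symm⟩
  exact (differentiableAt_mobiusInv (hplam z hz)).comp_differentiableWithinAt z (hp z hz)

/-- `z f'(z) / f(z)`, written as `f'(z) / (f(z) / z)` so that for `f 0 = 0` it is holomorphic
at `0` too. -/
noncomputable def zLogDeriv (f : ℂ → ℂ) (z : ℂ) : ℂ := deriv f z / dslope f 0 z

section zLogDeriv

variable {f : ℂ → ℂ} {s : Set ℂ}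

theorem zLogDeriv_of_ne_zero (hf0 : f 0 = 0) {z : ℂ} (hz : z ≠ 0) :
    zLogDeriv f z = z * deriv f z / f z := by
  rw [zLogDeriv, dslope_of_ne _ hz, slope_def_field, hf0, sub_zero, sub_zero, div_div_eq_mul_div,
    mul_comm]

theorem zLogDeriv_zero (hf'0 : deriv f 0 ≠ 0) : zLogDeriv f 0 = 1 := by
  rw [zLogDeriv, dslope_same, div_self hf'0]

theorem dslope_ne_zero (hf0 : f 0 = 0) (hf'0 : deriv f 0 ≠ 0)
    (hfne : ∀ z ∈ s, z ≠ 0 → f z ≠ 0) : ∀ z ∈ s, dslope f 0 z ≠ 0 := by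
  intro z hz
  rcases eq_or_ne z 0 with rfl | hz0
  · rwa [dslope_same]
  · rw [dslope_of_ne _ hz0, slope_def_module, hf0, sub_zero, sub_zero]
    exact smul_ne_zero (inv_ne_zero hz0) (hfne z hz hz0)

theorem zLogDeriv_ne_zero (hf0 : f 0 = 0) (hf'0 : deriv f 0 ≠ 0)
    (hfne : ∀ z ∈ s, z ≠ 0 → f z ≠ 0) (hf'ne : ∀ z ∈ s, z ≠ 0 → deriv f z ≠ 0) :
    ∀ z ∈ s, zLogDeriv f z ≠ 0 := by
  intro z hz
  rcases eq_or_ne z 0 with rfl | hz0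
  · rw [zLogDeriv_zero hf'0]; exact one_ne_zero
  · exact div_ne_zero (hf'ne z hz hz0) (dslope_ne_zero hf0 hf'0 hfne z hz)

theorem differentiableOn_zLogDeriv (hs : IsOpen s) (hs0 : (0 : ℂ) ∈ s)
    (hf : DifferentiableOn ℂ f s) (hf0 : f 0 = 0) (hf'0 : deriv f 0 ≠ 0)
    (hfne : ∀ z ∈ s, z ≠ 0 → f z ≠ 0) : DifferentiableOn ℂ (zLogDeriv f) s :=
  ((analyticOnNhd_iff_differentiableOn hs).2 hf).deriv.differentiableOn.div
    ((Complex.differentiableOn_dslope (hs.mem_nhds hs0)).2 hf) (dslope_ne_zero hf0 hf'0 hfne)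

theorem one_add_mul_deriv_deriv_div_eq (hs : IsOpen s) (hs0 : (0 : ℂ) ∈ s)
    (hf : DifferentiableOn ℂ f s) (hf0 : f 0 = 0) {z : ℂ} (hz : z ∈ s)
    (hpz : zLogDeriv f z ≠ 0) :
    1 + z * deriv (deriv f) z / deriv f z =
      zLogDeriv f z + z * deriv (zLogDeriv f) z / zLogDeriv f z := by
  obtain ⟨hf'z, hgz⟩ := div_ne_zero_iff.1 hpz
  have hg : DifferentiableAt ℂ (dslope f 0) z :=
    ((Complex.differentiableOn_dslope (hs.mem_nhds hs0)).2 hf).differentiableAt (hs.mem_nhds hz)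
  have hf' : DifferentiableAt ℂ (deriv f) z :=
    (((analyticOnNhd_iff_differentiableOn hs).2 hf).deriv z hz).differentiableAt
  have hf'g : deriv f z = dslope f 0 z + z * deriv (dslope f 0) z := by
    have hfg : f = fun z => z * dslope f 0 z := funext fun z => by
      simpa [hf0] using (sub_smul_dslope f 0 z).symm
    rw [congrArg (deriv · z) hfg, deriv_fun_mul differentiableAt_fun_id hg, deriv_id'', one_mul]
  unfold zLogDeriv
  rw [deriv_fun_div hf' hg hgz]
  field_simp
  linear_combination -deriv f z * hf'g

end zLogDeriv

theorem stmt_8_general (lam : ℝ) (hlam1 : 1 < lam)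
    (f : ℂ → ℂ) (hf : DifferentiableOn ℂ f (ball 0 1))
    (hf0 : f 0 = 0) (hf'0 : deriv f 0 = 1)
    (hfne : ∀ z ∈ ball (0:ℂ) 1, z ≠ 0 → f z ≠ 0)
    (hf'ne : ∀ z ∈ ball (0:ℂ) 1, z ≠ 0 → deriv f z ≠ 0)
    (hre1 : lam ≤ 2 → ∀ z ∈ ball (0:ℂ) 1,
      (1 + z * deriv (deriv f) z / deriv f z).re < (5 * lam - 1) / (2 * (lam + 1)))
    (hre2 : 2 < lam → ∀ z ∈ ball (0:ℂ) 1,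
      (1 + z * deriv (deriv f) z / deriv f z).re < (lam + 1) / (2 * (lam - 1))) :
    ∃ w : ℂ → ℂ, DifferentiableOn ℂ w (ball 0 1) ∧ w 0 = 0 ∧
      (∀ z ∈ ball (0:ℂ) 1, w z ∈ ball (0:ℂ) 1) ∧
      ∀ z ∈ ball (0:ℂ) 1, z ≠ 0 →
        z * deriv f z / f z = (lam : ℂ) * (1 - w z) / ((lam : ℂ) - w z) := by
  have h0 : (0 : ℂ) ∈ ball (0 : ℂ) 1 := mem_ball_self one_pos
  have hf'0' : deriv f 0 ≠ 0 := hf'0 ▸ one_ne_zero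
  have hp := differentiableOn_zLogDeriv isOpen_ball h0 hf hf0 hf'0' hfne
  have hpne := zLogDeriv_ne_zero hf0 hf'0' hfne hf'ne
  have hre : ∀ z ∈ ball (0 : ℂ) 1,
      (zLogDeriv f z + z * deriv (zLogDeriv f) z / zLogDeriv f z).re < reBound lam := by
    intro z hz
    rw [← one_add_mul_deriv_deriv_div_eq isOpen_ball h0 hf hf0 hz (hpne z hz), reBound]
    split_ifs with h
    exacts [hre1 h z hz, hre2 (not_le.1 h) z hz]
  obtain ⟨w, hw, hw0, hwD, hpw⟩ := exists_mobius_subordination hlam1 hp (zLogDeriv_zero hf'0')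
    (norm_mul_sub_one_lt_of_re_lt hlam1 hp (zLogDeriv_zero hf'0') hpne hre)
  exact ⟨w, hw, hw0, hwD, fun z hz hz0 => by rw [← zLogDeriv_of_ne_zero hf0 hz0, hpw z hz, mobius]⟩

theorem stmt_8 (lam : ℝ) (hlam1 : 1 < lam) (hlam3 : lam < 3)
    (f : ℂ → ℂ) (hf : DifferentiableOn ℂ f (ball 0 1))
    (hf0 : f 0 = 0) (hf'0 : deriv f 0 = 1)
    (hfne : ∀ z ∈ ball (0:ℂ) 1, z ≠ 0 → f z ≠ 0)
    (hf'ne : ∀ z ∈ ball (0:ℂ) 1, z ≠ 0 → deriv f z ≠ 0)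
    (hre1 : lam ≤ 2 → ∀ z ∈ ball (0:ℂ) 1,
      (1 + z * deriv (deriv f) z / deriv f z).re < (5 * lam - 1) / (2 * (lam + 1)))
    (hre2 : 2 < lam → ∀ z ∈ ball (0:ℂ) 1,
      (1 + z * deriv (deriv f) z / deriv f z).re < (lam + 1) / (2 * (lam - 1))) :
    ∃ w : ℂ → ℂ, DifferentiableOn ℂ w (ball 0 1) ∧ w 0 = 0 ∧
      (∀ z ∈ ball (0:ℂ) 1, w z ∈ ball (0:ℂ) 1) ∧
      ∀ z ∈ ball (0:ℂ) 1, z ≠ 0 →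
        z * deriv f z / f z = (lam : ℂ) * (1 - w z) / ((lam : ℂ) - w z) :=
  stmt_8_general lam hlam1 f hf hf0 hf'0 hfne hf'ne hre1 hre2
end

section
/- Let 0 ≤ α < 1, p ≥ 1 an integer, n ≥ 1 an integer, m ≥ n a real number, and θ ∈ ℝ. Then p + Re(α m e^{iθ}/(1 + α e^{iθ})) − Re(m e^{iθ}/(1 + e^{iθ})) ≤ ((2p−n) + α(2p+n)) / (2(α+1)), provided e^{iθ} ≠ −1. -/
open Complex

/-!
On the unit circle `Re (a r w / (1 + a w)) = a r (a + cos θ) / (1 + a² + 2 a cos θ)`, which for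
`0 ≤ a ≤ 1` is largest at `θ = 0`, and `Re (r w / (1 + w)) = r / 2`. The resulting bound
`p + α m / (α + 1) - m / 2` decreases in `m`, so it is largest at `m = n`.
-/

-- No hypothesis needed: where `1 + a e^{iθ} = 0` both denominators vanish and both sides are `0`.
theorem re_mul_exp_div_one_add_mul_exp (a r θ : ℝ) :
    ((a : ℂ) * r * exp (θ * I) / (1 + a * exp (θ * I))).re =
      a * r * (a + Real.cos θ) / (1 + a ^ 2 + 2 * a * Real.cos θ) := by
  have hnormSq : normSq (1 + a * exp (θ * I)) = 1 + a ^ 2 + 2 * a * Real.cos θ := by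
    rw [exp_mul_I, ← ofReal_cos, ← ofReal_sin, normSq_apply]
    simp only [add_re, add_im, mul_re, mul_im, one_re, one_im, ofReal_re, ofReal_im, I_re, I_im]
    linear_combination a ^ 2 * Real.sin_sq_add_cos_sq θ
  rw [div_re, hnormSq, ← add_div]
  congr 1
  rw [exp_mul_I, ← ofReal_cos, ← ofReal_sin]
  simp only [add_re, add_im, mul_re, mul_im, one_re, one_im, ofReal_re, ofReal_im, I_re, I_im]
  linear_combination a ^ 2 * r * Real.sin_sq_add_cos_sq θ

theorem re_mul_exp_div_one_add_exp (r θ : ℝ) (hθ : exp (θ * I) ≠ -1) :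
    ((r : ℂ) * exp (θ * I) / (1 + exp (θ * I))).re = r / 2 := by
  have hcos : 1 + Real.cos θ ≠ 0 := by
    intro h
    refine hθ ?_
    have hsin : Real.sin θ = 0 := by nlinarith [Real.sin_sq_add_cos_sq θ]
    rw [exp_mul_I, ← ofReal_cos, ← ofReal_sin, hsin, eq_neg_of_add_eq_zero_right h]
    simp
  have := re_mul_exp_div_one_add_mul_exp 1 r θ
  simp only [ofReal_one, one_mul, one_pow] at this
  rw [this, show (1 : ℝ) + 1 + 2 * 1 * Real.cos θ = 2 * (1 + Real.cos θ) by ring,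
    mul_div_mul_right _ _ hcos]

theorem mul_add_cos_div_le (a r θ : ℝ) (ha0 : 0 ≤ a) (ha1 : a ≤ 1) (hr : 0 ≤ r) :
    a * r * (a + Real.cos θ) / (1 + a ^ 2 + 2 * a * Real.cos θ) ≤ a * r / (a + 1) := by
  have hcos := Real.neg_one_le_cos θ
  have hD : 0 ≤ 1 + a ^ 2 + 2 * a * Real.cos θ := by nlinarith
  rcases hD.eq_or_lt with hD | hD
  · rw [← hD, div_zero]
    positivity
  rw [div_le_div_iff₀ hD (by linarith)]
  -- the difference of the two sides is `a r (1 - a)(1 - cos θ) ≥ 0`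
  nlinarith [mul_nonneg (mul_nonneg (mul_nonneg ha0 hr) (sub_nonneg.2 ha1))
    (sub_nonneg.2 (Real.cos_le_one θ))]

theorem add_mul_div_sub_half_le (a p n m : ℝ) (ha0 : -1 < a) (ha1 : a ≤ 1) (hm : n ≤ m) :
    p + a * m / (a + 1) - m / 2 ≤ ((2 * p - n) + a * (2 * p + n)) / (2 * (a + 1)) := by
  have ha : 0 < a + 1 := by linarith
  rw [← sub_nonneg]
  have key : ((2 * p - n) + a * (2 * p + n)) / (2 * (a + 1)) - (p + a * m / (a + 1) - m / 2)
      = (m - n) * (1 - a) / (2 * (a + 1)) := by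
    field_simp
    ring
  rw [key]
  have := sub_nonneg.2 hm
  have := sub_nonneg.2 ha1
  positivity

theorem stmt_10_general (α : ℝ) (hα0 : 0 ≤ α) (hα1 : α < 1) (p n : ℕ)
    (m θ : ℝ) (hm : (n : ℝ) ≤ m) (hθ : Complex.exp (θ * I) ≠ -1) :
    (p : ℝ) + ((α : ℂ) * m * Complex.exp (θ * I) / (1 + α * Complex.exp (θ * I))).re -
        ((m : ℂ) * Complex.exp (θ * I) / (1 + Complex.exp (θ * I))).re ≤
      ((2 * p - n : ℝ) + α * (2 * p + n)) / (2 * (α + 1)) := by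
  rw [re_mul_exp_div_one_add_mul_exp, re_mul_exp_div_one_add_exp m θ hθ]
  have hm0 : 0 ≤ m := (Nat.cast_nonneg n).trans hm
  calc (p : ℝ) + α * m * (α + Real.cos θ) / (1 + α ^ 2 + 2 * α * Real.cos θ) - m / 2
      ≤ p + α * m / (α + 1) - m / 2 := by
        linarith [mul_add_cos_div_le α m θ hα0 hα1.le hm0]
    _ ≤ _ := add_mul_div_sub_half_le α p n m (by linarith) hα1.le hm

theorem stmt_10 (α : ℝ) (hα0 : 0 ≤ α) (hα1 : α < 1) (p n : ℕ) (hp : 1 ≤ p) (hn : 1 ≤ n)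
    (m θ : ℝ) (hm : (n : ℝ) ≤ m) (hθ : Complex.exp (θ * I) ≠ -1) :
    (p : ℝ) + ((α : ℂ) * m * Complex.exp (θ * I) / (1 + α * Complex.exp (θ * I))).re -
        ((m : ℂ) * Complex.exp (θ * I) / (1 + Complex.exp (θ * I))).re ≤
      ((2 * p - n : ℝ) + α * (2 * p + n)) / (2 * (α + 1)) :=
  stmt_10_general α hα0 hα1 p n m θ hm hθ
end

section
/- Let 0 ≤ α < 1, p ≥ 1 an integer, n ≥ 1 an integer, m ≥ n a real number, and θ ∈ ℝ with 1 + (1+α) e^{iθ} ≠ 0. Then p + m(1+α)(1+α+cos θ) / (1 + (1+α)² + 2(1+α) cos θ) ≥ ((p+n)α + (2p+n)) / (α+2). -/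
open Complex

theorem stmt_11 (α : ℝ) (hα0 : 0 ≤ α) (hα1 : α < 1) (p n : ℕ) (hp : 1 ≤ p) (hn : 1 ≤ n)
    (m θ : ℝ) (hm : (n : ℝ) ≤ m)
    (hθ : (1 : ℂ) + ((1 + α : ℝ) : ℂ) * Complex.exp (θ * I) ≠ 0) :
    (((p : ℝ) + n) * α + (2 * p + n)) / (α + 2) ≤
      (p : ℝ) + m * (1 + α) * (1 + α + Real.cos θ) /
        (1 + (1 + α) ^ 2 + 2 * (1 + α) * Real.cos θ) := by
  set c := Real.cos θ with hc
  have hcos := Real.neg_one_le_cos θ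
  have hcos1 := Real.cos_le_one θ
  have hsc := Real.sin_sq_add_cos_sq θ
  have hn1 : (1 : ℝ) ≤ n := by exact_mod_cast hn
  have hp1 : (1 : ℝ) ≤ p := by exact_mod_cast hp
  have hD : 0 < 1 + (1 + α) ^ 2 + 2 * (1 + α) * c := by
    rcases lt_or_eq_of_le (show (0:ℝ) ≤ 1 + (1 + α) ^ 2 + 2 * (1 + α) * c by nlinarith [sq_nonneg (1 + α + c)]) with h | h
    · exact h
    · exfalso
      have hs : Real.sin θ = 0 := by nlinarith [sq_nonneg (1 + α + c), sq_nonneg (Real.sin θ)]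
      have hα : α = 0 := by nlinarith [sq_nonneg (Real.sin θ)]
      have hc1 : c = -1 := by nlinarith [sq_nonneg (Real.sin θ)]
      apply hθ
      rw [Complex.exp_mul_I]
      have : Complex.cos θ = (c : ℂ) := by
        rw [hc]; exact_mod_cast (Complex.ofReal_cos θ).symm
      rw [this, show Complex.sin θ = ((Real.sin θ : ℝ) : ℂ) from (Complex.ofReal_sin θ).symm,
        hs, hc1, hα]
      push_cast
      ring
  have key : (n : ℝ) * (1 + α) / (α + 2) ≤ m * (1 + α) * (1 + α + c) /
      (1 + (1 + α) ^ 2 + 2 * (1 + α) * c) := by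
    rw [div_le_div_iff₀ (by linarith) hD]
    nlinarith [mul_nonneg (sub_nonneg.2 hm) (show (0:ℝ) ≤ (α+2)*(1+α+c) by nlinarith),
      mul_nonneg (mul_nonneg (show (0:ℝ) ≤ n by linarith) hα0)
        (show (0:ℝ) ≤ (1+α)*(1-c) by nlinarith)]
  have heq : (((p : ℝ) + n) * α + (2 * p + n)) / (α + 2) =
      (p : ℝ) + (n : ℝ) * (1 + α) / (α + 2) := by
    field_simp
    ring
  rw [heq]
  linarith
end
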